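/- arXiv:2211.00169 — 4 statements merged into one kernel-verified Lean document; each statement's English description precedes it below -/
import Mathlib

section
/- Consider the SIS model with multi-layer population dispersal. If the initial infected fractions satisfy p^α_i(0) ∈ [0,1] for all i, α, and p(0) is not identically zero (i.e. p^σ_j(0) > 0 for at least one pair (j,σ)), then p^α_i(t) > 0 for every i ∈ {1,…,n}, every α ∈ {1,…,m}, and every t > 0. -/
open Matrix BigOperators Finset Filter Topology

/-- `fFrac x σ i` is the fraction of the total population at node `i`
contributed by class (layer) `σ`. -/
noncomputable def fFrac {n m : ℕ} (x : Fin m → Fin n → ℝ) (σ : Fin m) (i : Fin n) : ℝ :=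
  x σ i / ∑ τ, x τ i

/-- `lEnt Q x α i j` is the `(i,j)` entry of the dispersal Laplacian `L^α(x)`. -/
noncomputable def lEnt {n m : ℕ} (Q : Fin m → Matrix (Fin n) (Fin n) ℝ)
    (x : Fin m → Fin n → ℝ) (α : Fin m) (i j : Fin n) : ℝ :=
  if i = j then (∑ k ∈ Finset.univ \ {i}, Q α k i * x α k) / x α i
  else -(Q α j i * x α j / x α i)

/-!
The populations stay positive because each `(Q^α)ᵀ` has nonnegative off-diagonal entries. For the
infected fractions, the vector field is quasi-positive on the boundary of `[0,1]^(m n)` up to a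
Lipschitz error, so the sum of squared negative parts of `p` (resp. `1 - p`) satisfies a linear
Grönwall inequality and vanishes at time `0`; hence `[0,1]` is invariant. Inside that box, at a zero
of `p^α_i` the derivative is at least the infection pressure from the other layers at node `i` plus
the inflow from infected neighbours in layer `α`, while elsewhere `p^α_i` decays at most
exponentially. So positivity persists at the initially infected `p^σ_j`, spreads to every layer at
node `j`, and then along the edges of the strongly connected dispersal graph of each layer.
-/

open Set Real

theorem le_mul_exp_of_hasDerivAt_le {f f' : ℝ → ℝ} {K a b : ℝ}
    (hf : ∀ t ∈ Icc a b, HasDerivAt f (f' t) t) (hle : ∀ t ∈ Icc a b, f' t ≤ K * f t) :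
    ∀ t ∈ Icc a b, f t ≤ f a * exp (K * (t - a)) := by
  intro t ht
  have := le_gronwallBound_of_liminf_deriv_right_le (f := f) (f' := f') (ε := 0)
    (fun s hs => (hf s hs).continuousAt.continuousWithinAt)
    (fun s hs _ hr => (hf s (Ico_subset_Icc_self hs)).hasDerivWithinAt.liminf_right_slope_le hr)
    le_rfl (fun s hs => by simpa using hle s (Ico_subset_Icc_self hs)) t ht
  rwa [gronwallBound_ε0] at this

theorem mul_exp_le_of_le_hasDerivAt {f f' : ℝ → ℝ} {K a b : ℝ}
    (hf : ∀ t ∈ Icc a b, HasDerivAt f (f' t) t) (hle : ∀ t ∈ Icc a b, K * f t ≤ f' t) :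
    ∀ t ∈ Icc a b, f a * exp (K * (t - a)) ≤ f t := by
  intro t ht
  have := le_mul_exp_of_hasDerivAt_le (f := -f) (fun s hs => (hf s hs).neg)
    (fun s hs => by simpa using hle s hs) t ht
  simp only [Pi.neg_apply, neg_mul, neg_le_neg_iff] at this
  exact this

theorem pos_of_hasDerivAt_pos_of_eq_zero {f f' : ℝ → ℝ} {K a b : ℝ} (hab : a < b)
    (hf : ∀ t ∈ Icc a b, HasDerivAt f (f' t) t) (hle : ∀ t ∈ Icc a b, -K * f t ≤ f' t)
    (ha : 0 ≤ f a) (hzero : ∀ t ∈ Ioo a b, f t = 0 → 0 < f' t) : 0 < f b := by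
  by_contra! hb
  have hvanish : ∀ t ∈ Icc a b, f t = 0 := by
    intro t ht
    have hlow := mul_exp_le_of_le_hasDerivAt hf hle t ht
    have hup := mul_exp_le_of_le_hasDerivAt (fun s hs => hf s ⟨ht.1.trans hs.1, hs.2⟩)
      (fun s hs => hle s ⟨ht.1.trans hs.1, hs.2⟩) b ⟨ht.2, le_rfl⟩
    have := exp_pos (-K * (t - a))
    have := exp_pos (-K * (b - t))
    nlinarith
  obtain ⟨c, hc⟩ := Set.nonempty_Ioo.2 hab
  have hconst : f =ᶠ[𝓝 c] fun _ => 0 := by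
    filter_upwards [Ioo_mem_nhds hc.1 hc.2] with t ht using hvanish t (Ioo_subset_Icc_self ht)
  have hderiv := (hf c (Ioo_subset_Icc_self hc)).unique
    ((hasDerivAt_const c 0).congr_of_eventuallyEq hconst)
  exact (hzero c hc (hvanish c (Ioo_subset_Icc_self hc))).ne' hderiv

theorem hasDerivAt_min_zero_sq (c : ℝ) :
    HasDerivAt (fun u : ℝ => min u 0 ^ 2) (2 * min c 0) c := by
  rcases lt_trichotomy c 0 with hc | rfl | hc
  · have hloc : (fun u : ℝ => min u 0 ^ 2) =ᶠ[𝓝 c] fun u => u ^ 2 := by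
      filter_upwards [eventually_lt_nhds hc] with u hu
      rw [min_eq_left hu.le]
    simpa [min_eq_left hc.le] using (hasDerivAt_pow 2 c).congr_of_eventuallyEq hloc
  · rw [hasDerivAt_iff_isLittleO_nhds_zero]
    simp only [zero_add, min_self, ne_eq, OfNat.ofNat_ne_zero, not_false_eq_true, zero_pow,
      sub_zero, mul_zero, smul_zero]
    refine (Asymptotics.isBigO_of_le _ fun u => ?_).trans_isLittleO
      (Asymptotics.isLittleO_pow_id (n := 2) one_lt_two)
    rcases le_total u 0 with h | h <;> simp [h]
  · have hloc : (fun u : ℝ => min u 0 ^ 2) =ᶠ[𝓝 c] fun _ => 0 := by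
      filter_upwards [eventually_gt_nhds hc] with u hu
      simp [min_eq_right hu.le]
    simpa [min_eq_right hc.le] using (hasDerivAt_const c (0 : ℝ)).congr_of_eventuallyEq hloc

theorem nonneg_of_hasDerivAt_quasipositive {ι : Type*} [Fintype ι] {y y' : ℝ → ι → ℝ}
    {K a b : ℝ} (hab : a ≤ b) (hy : ∀ t ∈ Icc a b, ∀ i, HasDerivAt (fun s => y s i) (y' t i) t)
    (hquasi : ∀ t ∈ Icc a b, ∀ i M, (∀ j, -M ≤ y t j) → y t i < 0 → -(K * M) ≤ y' t i)
    (ha : ∀ i, 0 ≤ y a i) : ∀ i, 0 ≤ y b i := by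
  set v : ℝ → ℝ := fun t => ∑ i, min (y t i) 0 ^ 2
  have hv_nonneg : ∀ t, 0 ≤ v t := fun t => by positivity
  have hsq_le : ∀ t i, min (y t i) 0 ^ 2 ≤ v t := fun t i =>
    Finset.single_le_sum (f := fun i => min (y t i) 0 ^ 2) (fun _ _ => sq_nonneg _)
      (Finset.mem_univ i)
  have hderiv : ∀ t ∈ Icc a b,
      HasDerivAt v (∑ i, 2 * min (y t i) 0 * y' t i) t := fun t ht =>
    HasDerivAt.fun_sum fun i _ => ((hasDerivAt_min_zero_sq _).comp t (hy t ht i) :)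
  have hterm : ∀ t ∈ Icc a b, ∀ i, 2 * min (y t i) 0 * y' t i ≤ 2 * |K| * v t := by
    intro t ht i
    rcases le_or_gt 0 (y t i) with hi | hi
    · rw [min_eq_right hi, mul_zero, zero_mul]
      exact mul_nonneg (by positivity) (hv_nonneg t)
    have hM : ∀ j, -√(v t) ≤ y t j := fun j =>
      (neg_le_neg (Real.abs_le_sqrt (hsq_le t j))).trans ((neg_abs_le _).trans (min_le_left _ _))
    have hbound := hquasi t ht i _ hM hi
    rw [min_eq_left hi.le]
    have hs := Real.sqrt_nonneg (v t)
    calc 2 * y t i * y' t i ≤ 2 * (-y t i) * (K * √(v t)) := by nlinarith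
      _ ≤ 2 * (-y t i) * (|K| * √(v t)) := by gcongr; linarith; exact le_abs_self K
      _ ≤ 2 * √(v t) * (|K| * √(v t)) := by gcongr; linarith [hM i]
      _ = 2 * |K| * v t := by
          linear_combination 2 * |K| * Real.mul_self_sqrt (hv_nonneg t)
  have hle : ∀ t ∈ Icc a b,
      ∑ i, 2 * min (y t i) 0 * y' t i ≤ (Fintype.card ι * (2 * |K|)) * v t := fun t ht => calc
    _ ≤ ∑ _i : ι, 2 * |K| * v t := Finset.sum_le_sum fun i _ => hterm t ht i
    _ = _ := by simp [mul_assoc]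
  have hv_a : v a = 0 := Finset.sum_eq_zero fun i _ => by simp [min_eq_right (ha i)]
  have hv_b : v b ≤ 0 := by
    simpa [hv_a] using le_mul_exp_of_hasDerivAt_le hderiv hle b ⟨hab, le_rfl⟩
  intro i
  have := (hsq_le b i).trans hv_b
  by_contra! hneg
  rw [min_eq_left hneg.le] at this
  nlinarith

theorem pos_of_hasDerivAt_sum_mul {ι : Type*} [Fintype ι] {A : Matrix ι ι ℝ}
    (hA : ∀ i j, i ≠ j → 0 ≤ A i j) {y : ℝ → ι → ℝ}
    (hy : ∀ i t, 0 ≤ t → HasDerivAt (fun s => y s i) (∑ j, A j i * y t j) t)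
    (h0 : ∀ i, 0 < y 0 i) : ∀ t, 0 ≤ t → ∀ i, 0 < y t i := by
  classical
  have hcol : ∀ i, ∑ j, |A j i| ≤ ∑ k, ∑ l, |A l k| := fun i =>
    Finset.single_le_sum (f := fun k => ∑ l, |A l k|)
      (fun k _ => Finset.sum_nonneg fun l _ => abs_nonneg _) (Finset.mem_univ i)
  have hnonneg : ∀ t, 0 ≤ t → ∀ i, 0 ≤ y t i := by
    intro T hT
    refine nonneg_of_hasDerivAt_quasipositive (K := ∑ k, ∑ l, |A l k|) hT
      (fun t ht i => hy i t ht.1) (fun t ht i M hM hi => ?_) (fun i => (h0 i).le)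
    have hterm : ∀ j, -(|A j i| * M) ≤ A j i * y t j := by
      intro j
      rcases eq_or_ne j i with rfl | hji
      · nlinarith [neg_abs_le (A j j), le_abs_self (A j j), hM j]
      · rw [abs_of_nonneg (hA j i hji)]
        nlinarith [mul_le_mul_of_nonneg_left (hM j) (hA j i hji)]
    have hM0 : 0 ≤ M := by linarith [hM i]
    calc -((∑ k, ∑ l, |A l k|) * M) ≤ ∑ j, -(|A j i| * M) := by
          rw [Finset.sum_neg_distrib, ← Finset.sum_mul]; nlinarith [hcol i]
      _ ≤ ∑ j, A j i * y t j := Finset.sum_le_sum fun j _ => hterm j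
  intro T hT i
  have hdiag : ∀ t ∈ Icc 0 T, A i i * y t i ≤ ∑ j, A j i * y t j := fun t ht => by
    rw [← Finset.add_sum_erase _ _ (Finset.mem_univ i)]
    have := Finset.sum_nonneg fun j (hj : j ∈ Finset.univ.erase i) =>
      mul_nonneg (hA j i (Finset.ne_of_mem_erase hj)) (hnonneg t ht.1 j)
    linarith
  have := mul_exp_le_of_le_hasDerivAt (fun t ht => hy i t ht.1) hdiag T ⟨hT, le_rfl⟩
  exact (mul_pos (h0 i) (exp_pos _)).trans_le this

section Field

variable {n m : ℕ} (Q : Fin m → Matrix (Fin n) (Fin n) ℝ) (β δ : Fin m → Fin n → ℝ)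
  (X P : Fin m → Fin n → ℝ) (α : Fin m) (i : Fin n)

noncomputable def inflowRate (j : Fin n) : ℝ := Q α j i * X α j / X α i

noncomputable def sisField : ℝ :=
  -(δ α i) * P α i + β α i * (∑ σ, fFrac X σ i * P σ i) * (1 - P α i)
    - ∑ j, lEnt Q X α i j * P α j

theorem sum_inflowRate : ∑ j ∈ Finset.univ \ {i}, inflowRate Q X α i j = lEnt Q X α i i := by
  simp only [inflowRate, lEnt, if_pos, Finset.sum_div]

theorem sum_lEnt_mul (y : Fin n → ℝ) :
    ∑ j, lEnt Q X α i j * y j = ∑ j ∈ Finset.univ \ {i}, inflowRate Q X α i j * (y i - y j) := by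
  rw [← Finset.sum_sdiff (Finset.subset_univ {i}), Finset.sum_singleton, ← sum_inflowRate,
    Finset.sum_mul, ← Finset.sum_add_distrib]
  refine Finset.sum_congr rfl fun j hj => ?_
  have hij : i ≠ j := fun h => (Finset.mem_sdiff.1 hj).2 (Finset.mem_singleton.2 h.symm)
  simp only [lEnt, if_neg hij, inflowRate]
  ring

theorem sisField_eq : sisField Q β δ X P α i =
    -(δ α i) * P α i + β α i * (∑ σ, fFrac X σ i * P σ i) * (1 - P α i)
      + ∑ j ∈ Finset.univ \ {i}, inflowRate Q X α i j * (P α j - P α i) := by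
  rw [sisField, sum_lEnt_mul, sub_eq_add_neg, ← Finset.sum_neg_distrib]
  congr 2 with j
  ring

end Field

section FieldBounds

variable {n m : ℕ} {Q : Fin m → Matrix (Fin n) (Fin n) ℝ} {β δ : Fin m → Fin n → ℝ}
  {X P : Fin m → Fin n → ℝ} {α : Fin m} {i : Fin n}

theorem fFrac_nonneg (hX : ∀ τ, 0 < X τ i) (σ : Fin m) : 0 ≤ fFrac X σ i :=
  div_nonneg (hX σ).le (Finset.sum_nonneg fun τ _ => (hX τ).le)

theorem fFrac_pos (hX : ∀ τ, 0 < X τ i) (σ : Fin m) : 0 < fFrac X σ i :=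
  div_pos (hX σ) (Finset.sum_pos (fun τ _ => hX τ) ⟨σ, Finset.mem_univ σ⟩)

theorem sum_fFrac_le_one : ∑ σ, fFrac X σ i ≤ 1 := by
  simp only [fFrac, ← Finset.sum_div]
  exact div_self_le_one _

theorem inflowRate_nonneg (hX : ∀ j, 0 < X α j) {j : Fin n} (hQ : 0 ≤ Q α j i) :
    0 ≤ inflowRate Q X α i j :=
  div_nonneg (mul_nonneg hQ (hX j).le) (hX i).le

theorem inflowRate_pos (hX : ∀ j, 0 < X α j) {j : Fin n} (hQ : 0 < Q α j i) :
    0 < inflowRate Q X α i j :=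
  div_pos (mul_pos hQ (hX j)) (hX i)

theorem mul_le_sum_inflowRate_mul (hX : ∀ j, 0 < X α j) (hQ : ∀ j, j ≠ i → 0 ≤ Q α j i)
    {z : Fin n → ℝ} {M : ℝ} (hz : ∀ j, M ≤ z j) :
    lEnt Q X α i i * M ≤ ∑ j ∈ Finset.univ \ {i}, inflowRate Q X α i j * z j := by
  rw [← sum_inflowRate, Finset.sum_mul]
  refine Finset.sum_le_sum fun j hj => mul_le_mul_of_nonneg_left (hz j) ?_
  exact inflowRate_nonneg hX (hQ j fun h => (Finset.mem_sdiff.1 hj).2 (Finset.mem_singleton.2 h))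

theorem sum_inflowRate_mul_le (hX : ∀ j, 0 < X α j) (hQ : ∀ j, j ≠ i → 0 ≤ Q α j i)
    {z : Fin n → ℝ} {M : ℝ} (hz : ∀ j, z j ≤ M) :
    ∑ j ∈ Finset.univ \ {i}, inflowRate Q X α i j * z j ≤ lEnt Q X α i i * M := by
  have := mul_le_sum_inflowRate_mul hX hQ (z := fun j => -z j) (M := -M) (by simpa using hz)
  simp only [mul_neg, Finset.sum_neg_distrib, neg_le_neg_iff] at this
  exact this

theorem neg_mul_le_sisField_of_neg (hX : ∀ σ j, 0 < X σ j) (hQ : ∀ j, j ≠ i → 0 ≤ Q α j i)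
    (hβ : 0 ≤ β α i) (hδ : 0 ≤ δ α i) {B R M : ℝ} (hB : β α i * (1 - P α i) ≤ B)
    (hR : lEnt Q X α i i ≤ R) (hM : ∀ σ j, -M ≤ P σ j) (hPi : P α i < 0) :
    -((B + R) * M) ≤ sisField Q β δ X P α i := by
  have hM0 : 0 ≤ M := by linarith [hM α i]
  have hS : -M ≤ ∑ σ, fFrac X σ i * P σ i := calc
    -M ≤ (∑ σ, fFrac X σ i) * -M := by nlinarith [sum_fFrac_le_one (X := X) (i := i)]
    _ ≤ ∑ σ, fFrac X σ i * P σ i := by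
      rw [Finset.sum_mul]
      exact Finset.sum_le_sum fun σ _ =>
        mul_le_mul_of_nonneg_left (hM σ i) (fFrac_nonneg (fun τ => hX τ i) σ)
  have hinfect : -(B * M) ≤ β α i * (∑ σ, fFrac X σ i * P σ i) * (1 - P α i) := by
    have : 0 ≤ β α i * (1 - P α i) := mul_nonneg hβ (by linarith)
    nlinarith
  have hdisperse : -(R * M) ≤ ∑ j ∈ Finset.univ \ {i}, inflowRate Q X α i j * (P α j - P α i) := by
    have := mul_le_sum_inflowRate_mul (hX α) hQ (z := fun j => P α j - P α i) (M := -M)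
      fun j => by linarith [hM α j]
    nlinarith
  rw [sisField_eq]
  nlinarith

theorem sisField_le_mul_of_one_lt (hX : ∀ σ j, 0 < X σ j) (hQ : ∀ j, j ≠ i → 0 ≤ Q α j i)
    (hβ : 0 ≤ β α i) (hδ : 0 ≤ δ α i) {R M : ℝ} (hR : lEnt Q X α i i ≤ R)
    (hP : ∀ σ, 0 ≤ P σ i) (hM : ∀ j, P α j ≤ 1 + M) (hPi : 1 < P α i) :
    sisField Q β δ X P α i ≤ R * M := by
  have hM0 : 0 ≤ M := by linarith [hM i]
  have hS : 0 ≤ ∑ σ, fFrac X σ i * P σ i :=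
    Finset.sum_nonneg fun σ _ => mul_nonneg (fFrac_nonneg (fun τ => hX τ i) σ) (hP σ)
  have hdisperse : ∑ j ∈ Finset.univ \ {i}, inflowRate Q X α i j * (P α j - P α i) ≤ R * M := by
    have := sum_inflowRate_mul_le (hX α) hQ (z := fun j => P α j - P α i) (M := M)
      fun j => by linarith [hM j]
    nlinarith
  rw [sisField_eq]
  nlinarith [mul_nonneg hβ hS, hP α]

theorem neg_mul_le_sisField_of_nonneg (hX : ∀ σ j, 0 < X σ j) (hQ : ∀ j, j ≠ i → 0 ≤ Q α j i)
    (hβ : 0 ≤ β α i) (hP : ∀ σ j, 0 ≤ P σ j) (hPi : P α i ≤ 1) :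
    -((δ α i + lEnt Q X α i i) * P α i) ≤ sisField Q β δ X P α i := by
  have hS : 0 ≤ ∑ σ, fFrac X σ i * P σ i :=
    Finset.sum_nonneg fun σ _ => mul_nonneg (fFrac_nonneg (fun τ => hX τ i) σ) (hP σ i)
  have hdisperse := mul_le_sum_inflowRate_mul (hX α) hQ (z := fun j => P α j - P α i)
    (M := -P α i) fun j => by linarith [hP α j]
  rw [sisField_eq]
  nlinarith [mul_nonneg (mul_nonneg hβ hS) (sub_nonneg.2 hPi)]

theorem sisField_pos_of_eq_zero (hX : ∀ σ j, 0 < X σ j) (hQ : ∀ j, j ≠ i → 0 ≤ Q α j i)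
    (hβ : 0 < β α i) (hP : ∀ σ j, 0 ≤ P σ j) (hPi : P α i = 0)
    (hsource : (∃ σ, 0 < P σ i) ∨ ∃ j, 0 < Q α j i ∧ 0 < P α j) :
    0 < sisField Q β δ X P α i := by
  have hterm : ∀ σ, 0 ≤ fFrac X σ i * P σ i := fun σ =>
    mul_nonneg (fFrac_nonneg (fun τ => hX τ i) σ) (hP σ i)
  have hflow : ∀ j ∈ Finset.univ \ {i}, 0 ≤ inflowRate Q X α i j * P α j := fun j hj =>
    mul_nonneg (inflowRate_nonneg (hX α)
      (hQ j fun h => (Finset.mem_sdiff.1 hj).2 (Finset.mem_singleton.2 h))) (hP α j)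
  rw [sisField_eq, hPi]
  simp only [mul_zero, zero_add, sub_zero, mul_one]
  rcases hsource with ⟨σ, hσ⟩ | ⟨j, hQj, hj⟩
  · have hS : 0 < ∑ σ, fFrac X σ i * P σ i := Finset.sum_pos' (fun σ _ => hterm σ)
      ⟨σ, Finset.mem_univ σ, mul_pos (fFrac_pos (fun τ => hX τ i) σ) hσ⟩
    nlinarith [mul_pos hβ hS, Finset.sum_nonneg hflow]
  · have hji : j ≠ i := by rintro rfl; linarith
    have : 0 < ∑ j ∈ Finset.univ \ {i}, inflowRate Q X α i j * P α j := Finset.sum_pos' hflow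
      ⟨j, by simpa using hji, mul_pos (inflowRate_pos (hX α) hQj) hj⟩
    have hS : 0 ≤ ∑ σ, fFrac X σ i * P σ i := Finset.sum_nonneg fun σ _ => hterm σ
    nlinarith [mul_nonneg hβ.le hS]

end FieldBounds

theorem exists_forall_le_of_continuousOn {ι : Type*} [Finite ι] {f : ι → ℝ → ℝ} {s : Set ℝ}
    (hs : IsCompact s) (hf : ∀ k, ContinuousOn (f k) s) : ∃ C, ∀ k, ∀ t ∈ s, f k t ≤ C := by
  choose C hC using fun k => hs.bddAbove_image (hf k)
  obtain ⟨C', hC'⟩ := Finite.exists_le C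
  exact ⟨C', fun k t ht => (hC k (mem_image_of_mem _ ht)).trans (hC' k)⟩

structure IsSISSolution {n m : ℕ} (Q : Fin m → Matrix (Fin n) (Fin n) ℝ)
    (β δ : Fin m → Fin n → ℝ) (p x : ℝ → Fin m → Fin n → ℝ) : Prop where
  offDiag_nonneg : ∀ α i j, i ≠ j → 0 ≤ Q α i j
  β_pos : ∀ α i, 0 < β α i
  δ_nonneg : ∀ α i, 0 ≤ δ α i
  x_pos : ∀ t, 0 ≤ t → ∀ α i, 0 < x t α i
  continuousOn_x : ∀ α i, ContinuousOn (fun t => x t α i) (Ici 0)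
  hasDerivAt_p : ∀ α i t, 0 ≤ t →
    HasDerivAt (fun s => p s α i) (sisField Q β δ (x t) (p t) α i) t

namespace IsSISSolution

variable {n m : ℕ} {Q : Fin m → Matrix (Fin n) (Fin n) ℝ} {β δ : Fin m → Fin n → ℝ}
  {p x : ℝ → Fin m → Fin n → ℝ}

theorem continuousOn_p (h : IsSISSolution Q β δ p x) (α : Fin m) (i : Fin n) :
    ContinuousOn (fun t => p t α i) (Ici 0) := fun t ht =>
  (h.hasDerivAt_p α i t ht).continuousAt.continuousWithinAt

theorem exists_lEnt_le (h : IsSISSolution Q β δ p x) (T : ℝ) :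
    ∃ R, ∀ t ∈ Icc 0 T, ∀ α i, lEnt Q (x t) α i i ≤ R := by
  obtain ⟨R, hR⟩ := exists_forall_le_of_continuousOn (s := Icc 0 T)
    (f := fun (k : Fin m × Fin n) t => lEnt Q (x t) k.1 k.2 k.2) isCompact_Icc fun k => by
      simp only [lEnt, if_pos]
      refine ContinuousOn.div (continuousOn_finsetSum _ fun l _ => ?_) ?_ ?_
      · exact continuousOn_const.mul ((h.continuousOn_x _ _).mono Icc_subset_Ici_self)
      · exact (h.continuousOn_x _ _).mono Icc_subset_Ici_self
      · exact fun t ht => (h.x_pos t ht.1 _ _).ne'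
  exact ⟨R, fun t ht α i => hR (α, i) t ht⟩

theorem nonneg (h : IsSISSolution Q β δ p x) (hp0 : ∀ α i, 0 ≤ p 0 α i) :
    ∀ t, 0 ≤ t → ∀ α i, 0 ≤ p t α i := by
  intro T hT α i
  obtain ⟨R, hR⟩ := h.exists_lEnt_le T
  obtain ⟨B, hB⟩ := exists_forall_le_of_continuousOn (s := Icc 0 T)
    (f := fun (k : Fin m × Fin n) t => β k.1 k.2 * (1 - p t k.1 k.2)) isCompact_Icc fun k =>
      continuousOn_const.mul
        (continuousOn_const.sub ((h.continuousOn_p _ _).mono Icc_subset_Ici_self))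
  refine nonneg_of_hasDerivAt_quasipositive (y := fun t (k : Fin m × Fin n) => p t k.1 k.2)
    (K := B + R) hT (fun t ht k => h.hasDerivAt_p k.1 k.2 t ht.1)
    (fun t ht k M hM hk => ?_) (fun k => hp0 k.1 k.2) (α, i)
  exact neg_mul_le_sisField_of_neg (h.x_pos t ht.1) (fun j hj => h.offDiag_nonneg _ _ _ hj)
    (h.β_pos _ _).le (h.δ_nonneg _ _) (hB k t ht) (hR t ht _ _) (fun σ j => hM (σ, j)) hk

theorem le_one (h : IsSISSolution Q β δ p x) (hp0 : ∀ α i, p 0 α i ∈ Icc (0 : ℝ) 1) :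
    ∀ t, 0 ≤ t → ∀ α i, p t α i ≤ 1 := by
  intro T hT α i
  obtain ⟨R, hR⟩ := h.exists_lEnt_le T
  suffices 0 ≤ 1 - p T α i by linarith
  refine nonneg_of_hasDerivAt_quasipositive (y := fun t (k : Fin m × Fin n) => 1 - p t k.1 k.2)
    (K := R) hT (fun t ht k => (h.hasDerivAt_p k.1 k.2 t ht.1).const_sub 1)
    (fun t ht k M hM hk => ?_) (fun k => sub_nonneg.2 (hp0 k.1 k.2).2) (α, i)
  have := sisField_le_mul_of_one_lt (h.x_pos t ht.1) (fun j hj => h.offDiag_nonneg _ _ _ hj)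
    (h.β_pos _ _).le (h.δ_nonneg _ _) (hR t ht _ _)
    (fun σ => h.nonneg (fun σ j => (hp0 σ j).1) t ht.1 σ k.2) (M := M)
    (fun j => by linarith [hM (k.1, j)]) (by linarith)
  linarith

theorem mem_Icc (h : IsSISSolution Q β δ p x) (hp0 : ∀ α i, p 0 α i ∈ Icc (0 : ℝ) 1) :
    ∀ t, 0 ≤ t → ∀ α i, p t α i ∈ Icc (0 : ℝ) 1 := fun t ht α i =>
  ⟨h.nonneg (fun σ j => (hp0 σ j).1) t ht α i, h.le_one hp0 t ht α i⟩

theorem exists_neg_mul_le_sisField (h : IsSISSolution Q β δ p x)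
    (hp0 : ∀ α i, p 0 α i ∈ Icc (0 : ℝ) 1) (α : Fin m) (i : Fin n) (b : ℝ) :
    ∃ K, ∀ t ∈ Icc 0 b, -K * p t α i ≤ sisField Q β δ (x t) (p t) α i := by
  obtain ⟨R, hR⟩ := h.exists_lEnt_le b
  refine ⟨δ α i + R, fun t ht => ?_⟩
  have h01 := h.mem_Icc hp0 t ht.1
  calc -(δ α i + R) * p t α i ≤ -((δ α i + lEnt Q (x t) α i i) * p t α i) := by
        nlinarith [hR t ht α i, (h01 α i).1]
    _ ≤ _ := neg_mul_le_sisField_of_nonneg (h.x_pos t ht.1)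
        (fun j hj => h.offDiag_nonneg _ _ _ hj) (h.β_pos α i).le (fun σ j => (h01 σ j).1)
        (h01 α i).2

theorem pos_of_pos_at_zero (h : IsSISSolution Q β δ p x) (hp0 : ∀ α i, p 0 α i ∈ Icc (0 : ℝ) 1)
    {α : Fin m} {i : Fin n} (hpos : 0 < p 0 α i) : ∀ t, 0 ≤ t → 0 < p t α i := by
  intro t ht
  obtain ⟨K, hK⟩ := h.exists_neg_mul_le_sisField hp0 α i t
  have := mul_exp_le_of_le_hasDerivAt (fun s hs => h.hasDerivAt_p α i s hs.1) hK t ⟨ht, le_rfl⟩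
  exact (mul_pos hpos (exp_pos _)).trans_le this

theorem pos_of_source (h : IsSISSolution Q β δ p x) (hp0 : ∀ α i, p 0 α i ∈ Icc (0 : ℝ) 1)
    {α : Fin m} {i : Fin n} {b : ℝ} (hb : 0 < b)
    (hsource : ∀ s ∈ Ioo 0 b, (∃ σ, 0 < p s σ i) ∨ ∃ j, 0 < Q α j i ∧ 0 < p s α j) :
    0 < p b α i := by
  obtain ⟨K, hK⟩ := h.exists_neg_mul_le_sisField hp0 α i b
  refine pos_of_hasDerivAt_pos_of_eq_zero hb (fun t ht => h.hasDerivAt_p α i t ht.1) hK (hp0 α i).1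
    fun s hs hzero => ?_
  have h01 := h.mem_Icc hp0 s hs.1.le
  exact sisField_pos_of_eq_zero (h.x_pos s hs.1.le) (fun j hj => h.offDiag_nonneg _ _ _ hj)
    (h.β_pos α i) (fun σ j => (h01 σ j).1) hzero (hsource s hs)

end IsSISSolution

theorem sis_multilayer_eventually_positive_general
    {n m : ℕ}
    (Q : Fin m → Matrix (Fin n) (Fin n) ℝ)
    (hQoff : ∀ (α : Fin m) (i j : Fin n), i ≠ j → 0 ≤ Q α i j)
    (hQirr : ∀ (α : Fin m) (i j : Fin n),
      Relation.ReflTransGen (fun a b => 0 < Q α a b) i j)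
    (β δ : Fin m → Fin n → ℝ)
    (hβ : ∀ α i, 0 < β α i) (hδ : ∀ α i, 0 ≤ δ α i)
    (p x : ℝ → Fin m → Fin n → ℝ)
    (hx0 : ∀ α i, 0 < x 0 α i)
    (hx : ∀ (α : Fin m) (i : Fin n) (t : ℝ), 0 ≤ t →
      HasDerivAt (fun s => x s α i) (∑ j, Q α j i * x t α j) t)
    (hp : ∀ (α : Fin m) (i : Fin n) (t : ℝ), 0 ≤ t →
      HasDerivAt (fun s => p s α i)
        (-(δ α i) * p t α i
          + β α i * (∑ σ, fFrac (x t) σ i * p t σ i) * (1 - p t α i)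
          - ∑ j, lEnt Q (x t) α i j * p t α j) t)
    (hp0 : ∀ α i, p 0 α i ∈ Set.Icc (0 : ℝ) 1)
    (hp0ne : ∃ (σ : Fin m) (j : Fin n), 0 < p 0 σ j) :
    ∀ (α : Fin m) (i : Fin n) (t : ℝ), 0 < t → 0 < p t α i := by
  have hsol : IsSISSolution Q β δ p x :=
    { offDiag_nonneg := hQoff
      β_pos := hβ
      δ_nonneg := hδ
      x_pos := fun t ht α i => pos_of_hasDerivAt_sum_mul (hQoff α) (hx α) (hx0 α) t ht i
      continuousOn_x := fun α i t ht => (hx α i t ht).continuousAt.continuousWithinAt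
      hasDerivAt_p := hp }
  obtain ⟨σ₀, j₀, hpos⟩ := hp0ne
  have hnode : ∀ α t, 0 < t → 0 < p t α j₀ := fun α t ht =>
    hsol.pos_of_source hp0 ht fun s hs => Or.inl ⟨σ₀, hsol.pos_of_pos_at_zero hp0 hpos s hs.1.le⟩
  intro α i t ht
  induction hQirr α j₀ i generalizing t with
  | refl => exact hnode α t ht
  | tail _ hQ ih => exact hsol.pos_of_source hp0 ht fun s hs => Or.inr ⟨_, hQ, ih s hs.1⟩

/-- For the SIS model with multi-layer population dispersal, if
`p^α_i(0) ∈ [0,1]` for all `i, α` and `p(0)` is not identically zero, then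
`p^α_i(t) > 0` for every `i`, `α` and every `t > 0`. -/
theorem sis_multilayer_eventually_positive
    {n m : ℕ} (hn : 2 ≤ n) (hm : 1 ≤ m)
    (Q : Fin m → Matrix (Fin n) (Fin n) ℝ)
    (hQoff : ∀ (α : Fin m) (i j : Fin n), i ≠ j → 0 ≤ Q α i j)
    (hQdiag : ∀ (α : Fin m) (i : Fin n), Q α i i = -∑ j ∈ Finset.univ \ {i}, Q α i j)
    (hQirr : ∀ (α : Fin m) (i j : Fin n),
      Relation.ReflTransGen (fun a b => 0 < Q α a b) i j)
    (β δ : Fin m → Fin n → ℝ)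
    (hβ : ∀ α i, 0 < β α i) (hδ : ∀ α i, 0 ≤ δ α i)
    (hδpos : ∀ α, ∃ k, 0 < δ α k)
    (p x : ℝ → Fin m → Fin n → ℝ)
    (hx0 : ∀ α i, 0 < x 0 α i)
    (hx : ∀ (α : Fin m) (i : Fin n) (t : ℝ), 0 ≤ t →
      HasDerivAt (fun s => x s α i) (∑ j, Q α j i * x t α j) t)
    (hp : ∀ (α : Fin m) (i : Fin n) (t : ℝ), 0 ≤ t →
      HasDerivAt (fun s => p s α i)
        (-(δ α i) * p t α i
          + β α i * (∑ σ, fFrac (x t) σ i * p t σ i) * (1 - p t α i)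
          - ∑ j, lEnt Q (x t) α i j * p t α j) t)
    (hp0 : ∀ α i, p 0 α i ∈ Set.Icc (0 : ℝ) 1)
    (hp0ne : ∃ (σ : Fin m) (j : Fin n), 0 < p 0 σ j) :
    ∀ (α : Fin m) (i : Fin n) (t : ℝ), 0 < t → 0 < p t α i :=
  sis_multilayer_eventually_positive_general Q hQoff hQirr β δ hβ hδ p x hx0 hx hp hp0 hp0ne
end

section
/- There exists a vector p* ∈ ℝ^{nm} that is entrywise positive and satisfies the endemic equilibrium equation (B F* − D − L*) p* − diag(p*) B F* p* = 0 if and only if the spectral abscissa satisfies μ(B F* − D − L*) > 0. -/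
/-!
Write `A = B F* − D − L*` as `M − G` with `M = B F*` entrywise nonnegative with positive diagonal,
and `G = D + L*` with nonpositive off-diagonal entries and nonnegative row sums (the rows of `L*`
sum to zero because each `π^α` is stationary for `Q^α`). Then `A` is an irreducible Metzler matrix,
so Perron–Frobenius, applied to `A + t I ≥ 0`, gives a positive eigenvector `u` for `μ(A)` and the
bound `c ≤ μ(A)` whenever `c v ≤ A v` for some `v > 0`.

If `p > 0` is an equilibrium, then `A p = p ⊙ M p ≥ (min M p) p`, so `μ(A) > 0`. Conversely, if
`μ(A) > 0`, the equilibria are the fixed points of a map that is monotone on the order interval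
`[ε u, 1]`; for small `ε` the vector `ε u` is a subsolution and `1` is a supersolution, so the
Knaster–Tarski theorem produces a fixed point.
-/

open Matrix BigOperators Finset

/-- Spectral abscissa of a real square matrix: the maximum of the real parts of its
(complex) eigenvalues. -/
noncomputable def specAbscissa {k : Type*} [Fintype k] [DecidableEq k]
    (M : Matrix k k ℝ) : ℝ :=
  sSup {r : ℝ | ∃ z ∈ spectrum ℂ (M.map Complex.ofReal), z.re = r}

/-- Diagonal `nm × nm` matrix (indexed by pairs `(α, i)`) built from rates `c^α_i`. -/
noncomputable def pairDiag {n m : ℕ} (c : Fin m → Fin n → ℝ) :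
    Matrix (Fin m × Fin n) (Fin m × Fin n) ℝ :=
  Matrix.diagonal fun q => c q.1 q.2

/-- The equilibrium dispersal Laplacian `L*`: block-diagonal, whose `α`-th `n × n` block
has `(i,i)` entry `ν^α_i = ∑_{j ≠ i} q^α_{ij}` and `(i,j)` entry `-q^α_{ji} π^α_j / π^α_i`
for `j ≠ i`. -/
noncomputable def Lstar {n m : ℕ} (Q : Fin m → Matrix (Fin n) (Fin n) ℝ)
    (piv : Fin m → Fin n → ℝ) : Matrix (Fin m × Fin n) (Fin m × Fin n) ℝ :=
  Matrix.of fun q q' =>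
    if q.1 = q'.1 then
      (if q.2 = q'.2 then ∑ j ∈ Finset.univ \ {q.2}, Q q.1 q.2 j
       else -(Q q.1 q'.2 q.2 * piv q.1 q'.2 / piv q.1 q.2))
    else 0

/-- The equilibrium population-fraction matrix `F*`: the `(α,σ)` block is the diagonal
matrix with entries `f^{*σ}_i = N^σ π^σ_i / ∑_τ N^τ π^τ_i` (the same row of blocks
repeated for every `α`). -/
noncomputable def Fstar {n m : ℕ} (N : Fin m → ℝ) (piv : Fin m → Fin n → ℝ) :
    Matrix (Fin m × Fin n) (Fin m × Fin n) ℝ :=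
  Matrix.of fun q q' =>
    if q.2 = q'.2 then N q'.1 * piv q'.1 q.2 / ∑ τ, N τ * piv τ q.2 else 0

open scoped ENNReal Topology

lemma eventually_nhds_smul_le {ι : Type*} [Finite ι] (x : ι → ℝ) {y : ι → ℝ}
    (hy : ∀ i, 0 < y i) : ∀ᶠ ε in 𝓝 (0 : ℝ), ε • x ≤ y := by
  refine Filter.eventually_all.2 fun i => ?_
  have : Filter.Tendsto (fun ε : ℝ => ε * x i) (𝓝 0) (𝓝 0) := by
    simpa using (continuous_mul_const (x i)).tendsto 0
  exact this.eventually (ge_mem_nhds (hy i))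

lemma add_div_add_le_add_div_add {a a' s s' d : ℝ} (hda : 0 < d + a) (haa' : a ≤ a')
    (hss' : s ≤ s') (hs'd : s' ≤ d) : (a + s) / (d + a) ≤ (a' + s') / (d + a') := by
  rw [div_le_div_iff₀ hda (by linarith)]
  nlinarith [mul_nonneg (sub_nonneg.2 haa') (sub_nonneg.2 hs'd),
    mul_nonneg (sub_nonneg.2 hss') (hda.le.trans (add_le_add_right haa' d))]

theorem exists_fixedPoint_of_monotoneOn_Icc {α : Type*} [ConditionallyCompleteLattice α]
    {a b : α} (hab : a ≤ b) {f : α → α} (hf : MonotoneOn f (Set.Icc a b)) (ha : a ≤ f a)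
    (hb : f b ≤ b) : ∃ x ∈ Set.Icc a b, f x = x := by
  have : Fact (a ≤ b) := ⟨hab⟩
  have hmaps : Set.MapsTo f (Set.Icc a b) (Set.Icc a b) := fun x hx =>
    ⟨ha.trans (hf ⟨le_rfl, hab⟩ hx hx.1), (hf hx ⟨hab, le_rfl⟩ hx.2).trans hb⟩
  let g : Set.Icc a b →o Set.Icc a b := ⟨hmaps.restrict, fun x y hxy => hf x.2 y.2 hxy⟩
  exact ⟨g.lfp, g.lfp.2, congrArg Subtype.val g.map_lfp⟩

namespace Matrix

variable {ι : Type*}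

lemma diagonal_diag_sub_apply_nonneg [DecidableEq ι] {G : Matrix ι ι ℝ}
    (hG : ∀ i j, i ≠ j → G i j ≤ 0) (i j : ι) :
    0 ≤ (diagonal G.diag - G) i j := by
  rcases eq_or_ne i j with rfl | hij
  · simp
  · simpa [hij] using hG i j hij

variable [Fintype ι]

section Nonneg

variable {P : Matrix ι ι ℝ}

lemma apply_mul_apply_le_mul_apply {R : Matrix ι ι ℝ} (hP : ∀ i j, 0 ≤ P i j)
    (hR : ∀ i j, 0 ≤ R i j) (i j k : ι) : P i j * R j k ≤ (P * R) i k :=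
  Finset.single_le_sum (f := fun l => P i l * R l k) (fun l _ => mul_nonneg (hP i l) (hR l k))
    (Finset.mem_univ j)

lemma mulVec_apply_pos {v : ι → ℝ} (hP : ∀ i j, 0 ≤ P i j) (hv : 0 ≤ v) {i j : ι}
    (hPij : 0 < P i j) (hvj : 0 < v j) : 0 < (P *ᵥ v) i :=
  (mul_pos hPij hvj).trans_le <| Finset.single_le_sum (f := fun l => P i l * v l)
    (fun l _ => mul_nonneg (hP i l) (hv l)) (Finset.mem_univ j)

lemma mulVec_mono {v w : ι → ℝ} (hP : ∀ i j, 0 ≤ P i j) (hvw : v ≤ w) : P *ᵥ v ≤ P *ᵥ w :=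
  fun i => Finset.sum_le_sum fun j _ => mul_le_mul_of_nonneg_left (hvw j) (hP i j)

lemma exists_pow_apply_pos_of_reflTransGen [DecidableEq ι] (hP : ∀ i j, 0 ≤ P i j) {i j : ι}
    (h : Relation.ReflTransGen (fun a b => 0 < P a b) i j) : ∃ k, 0 < (P ^ k) i j := by
  induction h with
  | refl => exact ⟨0, by simp⟩
  | @tail b c _ hbc ih =>
    obtain ⟨k, hk⟩ := ih
    exact ⟨k + 1, pow_succ P k ▸ (mul_pos hk hbc).trans_le
      (apply_mul_apply_le_mul_apply (pow_apply_nonneg hP k) hP i b c)⟩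

theorem exists_forall_pow_apply_pos [DecidableEq ι] (hP : ∀ i j, 0 ≤ P i j) (hdiag : ∀ i, 0 < P i i)
    (hirr : ∀ i j, Relation.ReflTransGen (fun a b => 0 < P a b) i j) :
    ∃ N, ∀ i j, 0 < (P ^ N) i j := by
  choose k hk using fun ij : ι × ι => exists_pow_apply_pos_of_reflTransGen hP (hirr ij.1 ij.2)
  refine ⟨Finset.univ.sup k, fun i j => ?_⟩
  -- the positive diagonal keeps a positive entry positive in all higher powers
  refine Nat.le_induction (hk (i, j)) (fun N _ hN => ?_) _ (Finset.le_sup (Finset.mem_univ (i, j)))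
  exact pow_succ P N ▸ (mul_pos hN (hdiag j)).trans_le
    (apply_mul_apply_le_mul_apply (pow_apply_nonneg hP N) hP i j j)

end Nonneg

section SpectralRadius

attribute [local instance] Matrix.linftyOpNormedRing Matrix.linftyOpNormedAlgebra

variable [DecidableEq ι] {P : Matrix ι ι ℝ}

lemma pow_smul_le_pow_mulVec (hP : ∀ i j, 0 ≤ P i j) {v : ι → ℝ} {c : ℝ} (hc : 0 ≤ c)
    (h : c • v ≤ P *ᵥ v) (k : ℕ) : c ^ k • v ≤ (P ^ k) *ᵥ v := by
  induction k with
  | zero => simp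
  | succ k ih =>
    calc c ^ (k + 1) • v = c ^ k • c • v := by rw [pow_succ, mul_smul]
      _ ≤ c ^ k • (P *ᵥ v) := smul_le_smul_of_nonneg_left h (pow_nonneg hc k)
      _ = P *ᵥ (c ^ k • v) := (mulVec_smul P (c ^ k) v).symm
      _ ≤ P *ᵥ ((P ^ k) *ᵥ v) := mulVec_mono hP ih
      _ = (P ^ (k + 1)) *ᵥ v := by rw [mulVec_mulVec, pow_succ']

lemma sum_apply_le_norm_map_ofReal (hP : ∀ i j, 0 ≤ P i j) (i : ι) :
    ∑ j, P i j ≤ ‖P.map ((↑) : ℝ → ℂ)‖ := by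
  have hrow : ∑ j, ‖P.map ((↑) : ℝ → ℂ) i j‖₊ ≤ ‖P.map ((↑) : ℝ → ℂ)‖₊ := by
    rw [linfty_opNNNorm_def]
    exact Finset.le_sup (f := fun i => ∑ j, ‖P.map ((↑) : ℝ → ℂ) i j‖₊) (Finset.mem_univ i)
  calc ∑ j, P i j = ∑ j, ‖P.map ((↑) : ℝ → ℂ) i j‖ := by simp [abs_of_nonneg (hP i _)]
    _ ≤ _ := by simpa only [← NNReal.coe_le_coe, NNReal.coe_sum, coe_nnnorm] using hrow

/-- The Collatz–Wielandt bound, from Gelfand's formula and `‖P ^ k‖ ≥ c ^ k`. -/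
theorem ofReal_le_spectralRadius_of_smul_le_mulVec (hP : ∀ i j, 0 ≤ P i j) {v : ι → ℝ}
    (hv : 0 ≤ v) (hv0 : v ≠ 0) {c : ℝ} (h : c • v ≤ P *ᵥ v) :
    ENNReal.ofReal c ≤ spectralRadius ℂ (P.map ((↑) : ℝ → ℂ)) := by
  rcases le_or_gt c 0 with hc | hc
  · simp [ENNReal.ofReal_of_nonpos hc]
  have : Nonempty ι := not_isEmpty_iff.1 fun _ => hv0 (Subsingleton.elim _ _)
  obtain ⟨i, hi⟩ := Finite.exists_max v
  have hvi : 0 < v i := by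
    obtain ⟨j, hj⟩ := Function.ne_iff.1 hv0
    exact ((hv j).lt_of_ne' hj).trans_le (hi j)
  have hpow (k : ℕ) : ENNReal.ofReal c ^ k ≤ ‖(P.map ((↑) : ℝ → ℂ)) ^ k‖₊ := by
    have hrow : c ^ k * v i ≤ (∑ j, (P ^ k) i j) * v i :=
      calc c ^ k * v i ≤ ((P ^ k) *ᵥ v) i := pow_smul_le_pow_mulVec hP hc.le h k i
        _ ≤ ∑ j, (P ^ k) i j * v i := Finset.sum_le_sum fun j _ =>
            mul_le_mul_of_nonneg_left (hi j) (pow_apply_nonneg hP k i j)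
        _ = (∑ j, (P ^ k) i j) * v i := (Finset.sum_mul ..).symm
    have hmap : (P.map ((↑) : ℝ → ℂ)) ^ k = (P ^ k).map (↑) :=
      (Matrix.map_pow P Complex.ofRealHom k).symm
    rw [← ENNReal.ofReal_pow hc.le, hmap]
    exact (ENNReal.ofReal_le_ofReal ((le_of_mul_le_mul_right hrow hvi).trans
      (sum_apply_le_norm_map_ofReal (pow_apply_nonneg hP k) i))).trans_eq (ofReal_norm _)
  refine le_trans ?_ (spectrum.limsup_pow_nnnorm_pow_one_div_le_spectralRadius _)
  refine Filter.le_limsup_of_frequently_le ?_ (by isBoundedDefault)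
  refine ((Filter.eventually_ge_atTop 1).mono fun k hk => ?_).frequently
  calc ENNReal.ofReal c = (ENNReal.ofReal c ^ k) ^ (1 / k : ℝ) := by
        rw [one_div, ENNReal.pow_rpow_inv_natCast (by omega)]
    _ ≤ _ := ENNReal.rpow_le_rpow (hpow k) (by positivity)

lemma mem_spectrum_iff_exists_mulVec_eq_smul {K : Type*} [Field K] (B : Matrix ι ι K) (z : K) :
    z ∈ spectrum K B ↔ ∃ x ≠ 0, B *ᵥ x = z • x := by
  rw [← spectrum_toLin', ← Module.End.hasEigenvalue_iff_mem_spectrum, Module.End.hasEigenvalue_iff,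
    Submodule.ne_bot_iff]
  simp [and_comm]

lemma exists_pos_eigenvector_of_smul_le_mulVec (hP : ∀ i j, 0 ≤ P i j)
    (hirr : ∀ i j, Relation.ReflTransGen (fun a b => 0 < P a b) i j) {ρ : ℝ} (hρ : 0 ≤ ρ)
    (hrad : spectralRadius ℂ (P.map ((↑) : ℝ → ℂ)) ≤ ENNReal.ofReal ρ) {u : ι → ℝ} (hu : 0 ≤ u)
    (hu0 : u ≠ 0) (h : ρ • u ≤ P *ᵥ u) : ∃ w, (∀ i, 0 < w i) ∧ P *ᵥ w = ρ • w := by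
  have hP1 (i j : ι) : P i j ≤ (1 + P) i j := by
    rw [add_apply, one_apply]; split_ifs <;> linarith
  obtain ⟨N, hN⟩ := exists_forall_pow_apply_pos (P := 1 + P)
    (fun i j => (hP i j).trans (hP1 i j))
    (fun i => by simpa using add_pos_of_pos_of_nonneg one_pos (hP i i))
    fun i j => Relation.ReflTransGen.mono (fun a b (hab : 0 < P a b) => hab.trans_le (hP1 a b)) _ _
      (hirr i j)
  set C := (1 + P) ^ N
  have hC {v : ι → ℝ} (hv : 0 ≤ v) (hv0 : v ≠ 0) (i : ι) : 0 < (C *ᵥ v) i := by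
    obtain ⟨j, hj⟩ := Function.ne_iff.1 hv0
    exact mulVec_apply_pos (fun i j => (hN i j).le) hv (hN i j) ((hv j).lt_of_ne' hj)
  have hPC : P * C = C * P := ((Commute.one_right P).add_right (Commute.refl P)).pow_right N
  set w := C *ᵥ u
  have hw (i : ι) : 0 < w i := hC hu hu0 i
  refine ⟨w, hw, ?_⟩
  by_contra hne
  -- otherwise `P w - ρ w = C (P u - ρ u)` is strictly positive, which pushes the spectral radius
  -- above `ρ`
  have hgap : P *ᵥ w - ρ • w = C *ᵥ (P *ᵥ u - ρ • u) := by
    simp only [w, mulVec_sub, mulVec_smul, mulVec_mulVec, hPC]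
  have hgap0 : P *ᵥ u - ρ • u ≠ 0 := fun h0 => hne (sub_eq_zero.1 (by rw [hgap, h0, mulVec_zero]))
  obtain ⟨ε, hεw, hε⟩ := ((eventually_nhds_smul_le w fun i => hgap ▸
    hC (sub_nonneg.2 h) hgap0 i).filter_mono nhdsWithin_le_nhds |>.and
    (self_mem_nhdsWithin (s := Set.Ioi 0))).exists
  have hle : (ρ + ε) • w ≤ P *ᵥ w :=
    calc (ρ + ε) • w = ρ • w + ε • w := add_smul ..
      _ ≤ ρ • w + (P *ᵥ w - ρ • w) := by gcongr
      _ = P *ᵥ w := add_sub_cancel _ _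
  obtain ⟨j, -⟩ := Function.ne_iff.1 hu0
  have := (ofReal_le_spectralRadius_of_smul_le_mulVec hP (fun i => (hw i).le)
    (fun h0 => (hw j).ne' (congrFun h0 j)) hle).trans hrad
  rw [ENNReal.ofReal_le_ofReal_iff hρ] at this
  exact (lt_add_of_pos_right ρ hε).not_ge this

theorem exists_perron_root [Nonempty ι] (hP : ∀ i j, 0 ≤ P i j)
    (hirr : ∀ i j, Relation.ReflTransGen (fun a b => 0 < P a b) i j) :
    ∃ ρ : ℝ, 0 ≤ ρ ∧ spectralRadius ℂ (P.map ((↑) : ℝ → ℂ)) = ENNReal.ofReal ρ ∧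
      ∃ u, (∀ i, 0 < u i) ∧ P *ᵥ u = ρ • u := by
  obtain ⟨z, hz, hzrad⟩ :=
    spectrum.exists_nnnorm_eq_spectralRadius_of_nonempty (spectrum.nonempty (P.map ((↑) : ℝ → ℂ)))
  obtain ⟨x, hx0, hx⟩ := (mem_spectrum_iff_exists_mulVec_eq_smul _ z).1 hz
  have hrad : spectralRadius ℂ (P.map ((↑) : ℝ → ℂ)) = ENNReal.ofReal ‖z‖ :=
    hzrad.symm.trans (ofReal_norm z).symm
  refine ⟨‖z‖, norm_nonneg z, hrad, exists_pos_eigenvector_of_smul_le_mulVec hP hirr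
    (norm_nonneg z) hrad.le (u := fun i => ‖x i‖) (fun i => norm_nonneg _) ?_ fun i => ?_⟩
  · exact fun h0 => hx0 (funext fun i => norm_eq_zero.1 (congrFun h0 i))
  · calc ‖z‖ * ‖x i‖ = ‖∑ j, (P i j : ℂ) * x j‖ := by
          rw [← norm_mul, ← smul_eq_mul, ← Pi.smul_apply z x, ← hx]; rfl
      _ ≤ ∑ j, P i j * ‖x j‖ := (norm_sum_le _ _).trans_eq <| Finset.sum_congr rfl fun j _ => by
          rw [norm_mul, Complex.norm_real, Real.norm_of_nonneg (hP i j)]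

end SpectralRadius

variable [DecidableEq ι]

lemma specAbscissa_eq_of_mulVec_eq_smul {A : Matrix ι ι ℝ} {u : ι → ℝ}
    (hu : u ≠ 0) {r : ℝ} (hAu : A *ᵥ u = r • u)
    (hle : ∀ z ∈ spectrum ℂ (A.map ((↑) : ℝ → ℂ)), z.re ≤ r) : specAbscissa A = r := by
  have hr : (r : ℂ) ∈ spectrum ℂ (A.map ((↑) : ℝ → ℂ)) := by
    refine (mem_spectrum_iff_exists_mulVec_eq_smul _ _).2
      ⟨fun i => u i, fun h0 => hu (funext fun i => by simpa using congrFun h0 i),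
        funext fun i => ?_⟩
    exact (Complex.ofRealHom.map_mulVec A u i).symm.trans (by simp [hAu])
  exact IsGreatest.csSup_eq ⟨⟨r, hr, rfl⟩, by rintro _ ⟨z, hz, rfl⟩; exact hle z hz⟩

lemma add_mem_spectrum_map_add_smul_one_iff (A : Matrix ι ι ℝ) (t : ℝ) (z : ℂ) :
    z + t ∈ spectrum ℂ ((A + t • 1).map ((↑) : ℝ → ℂ)) ↔ z ∈ spectrum ℂ (A.map ((↑) : ℝ → ℂ)) := by
  have hmap : (A + t • 1).map ((↑) : ℝ → ℂ) = algebraMap ℂ _ (t : ℂ) + A.map (↑) := by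
    ext i j
    simp only [map_apply, add_apply, smul_apply, one_apply, algebraMap_matrix_apply]
    split_ifs <;> simp [add_comm]
  rw [hmap, spectrum.add_mem_add_iff]

theorem perron_frobenius_of_offDiag_nonneg [Nonempty ι] {A : Matrix ι ι ℝ}
    (hA : ∀ i j, i ≠ j → 0 ≤ A i j)
    (hirr : ∀ i j, Relation.ReflTransGen (fun a b => 0 < A a b) i j) :
    (∃ u, (∀ i, 0 < u i) ∧ A *ᵥ u = specAbscissa A • u) ∧
      ∀ {v : ι → ℝ} {c : ℝ}, (∀ i, 0 < v i) → c • v ≤ A *ᵥ v → c ≤ specAbscissa A := by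
  set t := ∑ i, |A i i|
  set P := A + t • 1
  have hPv (v : ι → ℝ) : P *ᵥ v = A *ᵥ v + t • v := by simp [P, add_mulVec, smul_mulVec]
  have hAP (i j : ι) : A i j ≤ P i j ∧ 0 ≤ P i j := by
    rcases eq_or_ne i j with rfl | hij
    · have : |A i i| ≤ t :=
        Finset.single_le_sum (f := fun i => |A i i|) (fun i _ => abs_nonneg _) (Finset.mem_univ i)
      simp only [P, add_apply, smul_apply, one_apply_eq, smul_eq_mul, mul_one]
      constructor <;> linarith [neg_abs_le (A i i), abs_nonneg (A i i)]
    · simpa [P, hij] using hA i j hij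
  obtain ⟨ρ, hρ, hrad, u, hu, hPu⟩ := exists_perron_root (fun i j => (hAP i j).2) fun i j =>
    Relation.ReflTransGen.mono (fun a b (h : 0 < A a b) => h.trans_le (hAP a b).1) _ _ (hirr i j)
  have hμ : specAbscissa A = ρ - t := by
    refine specAbscissa_eq_of_mulVec_eq_smul
      (fun h0 => (hu (Classical.arbitrary ι)).ne' (congrFun h0 _)) ?_ fun z hz => ?_
    · rw [sub_smul, eq_sub_iff_add_eq, ← hPu, hPv]
    · have hnorm : ‖z + t‖ ≤ ρ := by
        rw [← ENNReal.ofReal_le_ofReal_iff hρ, ofReal_norm, ← hrad]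
        exact le_iSup₂ (α := ℝ≥0∞) (z + t) ((add_mem_spectrum_map_add_smul_one_iff A t z).2 hz)
      have := Complex.re_le_norm (z + t)
      simp only [Complex.add_re, Complex.ofReal_re] at this
      linarith
  refine ⟨⟨u, hu, ?_⟩, fun {v c} hv h => ?_⟩
  · rw [hμ, sub_smul, eq_sub_iff_add_eq, ← hPu, hPv]
  · have hle : (c + t) • v ≤ P *ᵥ v := by
      rw [hPv, add_smul]
      exact add_le_add_left h _
    have := (ofReal_le_spectralRadius_of_smul_le_mulVec (fun i j => (hAP i j).2)
      (fun i => (hv i).le) (fun h0 => (hv (Classical.arbitrary ι)).ne' (congrFun h0 _)) hle).trans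
      hrad.le
    rw [ENNReal.ofReal_le_ofReal_iff hρ] at this
    linarith

section Equilibrium

variable {M G : Matrix ι ι ℝ}

lemma diagonal_diag_sub_mulVec_apply (G : Matrix ι ι ℝ) (v : ι → ℝ) (i : ι) :
    ((diagonal G.diag - G) *ᵥ v) i = G i i * v i - (G *ᵥ v) i := by
  simp [sub_mulVec, mulVec_diagonal]

lemma diagonal_diag_sub_mulVec_apply_le (hG : ∀ i j, i ≠ j → G i j ≤ 0)
    (hGrow : ∀ i, 0 ≤ ∑ j, G i j) {v : ι → ℝ} (hv1 : v ≤ 1) (i : ι) :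
    ((diagonal G.diag - G) *ᵥ v) i ≤ G i i :=
  calc ((diagonal G.diag - G) *ᵥ v) i ≤ ((diagonal G.diag - G) *ᵥ 1) i :=
        mulVec_mono (diagonal_diag_sub_apply_nonneg hG) hv1 i
    _ = G i i - ∑ j, G i j := by rw [diagonal_diag_sub_mulVec_apply]; simp [mulVec, dotProduct]
    _ ≤ G i i := sub_le_self _ (hGrow i)

lemma diag_nonneg_of_offDiag_nonpos (hG : ∀ i j, i ≠ j → G i j ≤ 0)
    (hGrow : ∀ i, 0 ≤ ∑ j, G i j) (i : ι) : 0 ≤ G i i := by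
  simpa using diagonal_diag_sub_mulVec_apply_le hG hGrow zero_le_one i

/-- Rearranging `(M - G) p = p ⊙ M p` as `p i (G i i + (M p) i) = (M p) i + ∑_{j ≠ i} (-G i j) p j`
turns the endemic equilibria into the fixed points of this map. -/
noncomputable def equilibriumMap (M G : Matrix ι ι ℝ) (p : ι → ℝ) : ι → ℝ :=
  fun i => ((M *ᵥ p) i + ((diagonal G.diag - G) *ᵥ p) i) / (G i i + (M *ᵥ p) i)

lemma equilibriumMap_denom_pos (hM : ∀ i j, 0 ≤ M i j) (hMdiag : ∀ i, 0 < M i i)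
    (hG : ∀ i j, i ≠ j → G i j ≤ 0) (hGrow : ∀ i, 0 ≤ ∑ j, G i j) {p : ι → ℝ}
    (hp : ∀ i, 0 < p i) (i : ι) : 0 < G i i + (M *ᵥ p) i :=
  add_pos_of_nonneg_of_pos (diag_nonneg_of_offDiag_nonpos hG hGrow i)
    (mulVec_apply_pos hM (fun j => (hp j).le) (hMdiag i) (hp i))

lemma equilibriumMap_monotoneOn (hM : ∀ i j, 0 ≤ M i j) (hMdiag : ∀ i, 0 < M i i)
    (hG : ∀ i j, i ≠ j → G i j ≤ 0) (hGrow : ∀ i, 0 ≤ ∑ j, G i j) {lo : ι → ℝ}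
    (hlo : ∀ i, 0 < lo i) : MonotoneOn (equilibriumMap M G) (Set.Icc lo 1) :=
  fun _ hp _ hq hpq i => add_div_add_le_add_div_add
    (equilibriumMap_denom_pos hM hMdiag hG hGrow (fun j => (hlo j).trans_le (hp.1 j)) i)
    (mulVec_mono hM hpq i) (mulVec_mono (diagonal_diag_sub_apply_nonneg hG) hpq i)
    (diagonal_diag_sub_mulVec_apply_le hG hGrow hq.2 i)

lemma equilibriumMap_one_le (hM : ∀ i j, 0 ≤ M i j) (hG : ∀ i j, i ≠ j → G i j ≤ 0)
    (hGrow : ∀ i, 0 ≤ ∑ j, G i j) : equilibriumMap M G 1 ≤ 1 := fun i =>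
  div_le_one_of_le₀ (by linarith [diagonal_diag_sub_mulVec_apply_le hG hGrow le_rfl i])
    (add_nonneg (diag_nonneg_of_offDiag_nonpos hG hGrow i)
      (Finset.sum_nonneg fun j _ => by simpa using hM i j))

lemma smul_le_equilibriumMap_smul (hM : ∀ i j, 0 ≤ M i j) (hMdiag : ∀ i, 0 < M i i)
    (hG : ∀ i j, i ≠ j → G i j ≤ 0) (hGrow : ∀ i, 0 ≤ ∑ j, G i j) {u : ι → ℝ}
    (hu : ∀ i, 0 < u i) {μ : ℝ} (hAu : (M - G) *ᵥ u = μ • u) {ε : ℝ} (hε : 0 < ε)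
    (hεM : ε • (M *ᵥ u) ≤ fun _ => μ) : ε • u ≤ equilibriumMap M G (ε • u) := fun i => by
  have hAu_i := congrFun hAu i
  simp only [sub_mulVec, Pi.sub_apply, Pi.smul_apply, smul_eq_mul] at hAu_i
  have hεM_i : ε * (M *ᵥ u) i ≤ μ := hεM i
  have hden : 0 < G i i + ε * (M *ᵥ u) i := by
    simpa [mulVec_smul] using
      equilibriumMap_denom_pos hM hMdiag hG hGrow (p := ε • u) (fun j => mul_pos hε (hu j)) i
  simp only [equilibriumMap, mulVec_smul, Pi.smul_apply, smul_eq_mul,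
    diagonal_diag_sub_mulVec_apply]
  rw [le_div_iff₀ hden]
  nlinarith [mul_le_mul_of_nonneg_left hεM_i (mul_nonneg hε.le (hu i).le)]

lemma sub_diagonal_mulVec_eq_zero_of_equilibriumMap_eq {p : ι → ℝ}
    (hden : ∀ i, G i i + (M *ᵥ p) i ≠ 0) (hfix : equilibriumMap M G p = p) :
    (M - G) *ᵥ p - diagonal p *ᵥ (M *ᵥ p) = 0 := funext fun i => by
  have hfix_i := congrFun hfix i
  rw [equilibriumMap, div_eq_iff (hden i), diagonal_diag_sub_mulVec_apply] at hfix_i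
  simp only [sub_mulVec, mulVec_diagonal, Pi.sub_apply, Pi.zero_apply]
  linarith

theorem exists_pos_equilibrium_iff_specAbscissa_pos [Nonempty ι] (hM : ∀ i j, 0 ≤ M i j)
    (hMdiag : ∀ i, 0 < M i i) (hG : ∀ i j, i ≠ j → G i j ≤ 0) (hGrow : ∀ i, 0 ≤ ∑ j, G i j)
    (hirr : ∀ i j, Relation.ReflTransGen (fun a b => 0 < (M - G) a b) i j) :
    (∃ p : ι → ℝ, (∀ i, 0 < p i) ∧ (M - G) *ᵥ p - diagonal p *ᵥ (M *ᵥ p) = 0) ↔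
      0 < specAbscissa (M - G) := by
  obtain ⟨⟨u, hu, hAu⟩, hle_specAbscissa⟩ := perron_frobenius_of_offDiag_nonneg
    (fun i j hij => sub_nonneg.2 ((hG i j hij).trans (hM i j))) hirr
  have hMp {p : ι → ℝ} (hp : ∀ i, 0 < p i) (i : ι) : 0 < (M *ᵥ p) i :=
    mulVec_apply_pos hM (fun j => (hp j).le) (hMdiag i) (hp i)
  constructor
  · rintro ⟨p, hp, heq⟩
    obtain ⟨i₀, hi₀⟩ := Finite.exists_min (M *ᵥ p)
    refine (hMp hp i₀).trans_le (hle_specAbscissa hp fun i => ?_)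
    have heq_i := congrFun heq i
    simp only [mulVec_diagonal, Pi.sub_apply, Pi.zero_apply] at heq_i
    calc (M *ᵥ p) i₀ * p i ≤ (M *ᵥ p) i * p i := mul_le_mul_of_nonneg_right (hi₀ i) (hp i).le
      _ = ((M - G) *ᵥ p) i := by linarith
  · intro hμ
    obtain ⟨ε, ⟨hεM, hεu⟩, hε⟩ := (((eventually_nhds_smul_le (M *ᵥ u) fun _ => hμ).and
      (eventually_nhds_smul_le u fun _ => one_pos)).filter_mono nhdsWithin_le_nhds |>.and
      (self_mem_nhdsWithin (s := Set.Ioi 0))).exists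
    obtain ⟨p, ⟨hlo, -⟩, hfix⟩ := exists_fixedPoint_of_monotoneOn_Icc hεu
      (equilibriumMap_monotoneOn hM hMdiag hG hGrow fun i => mul_pos hε (hu i))
      (smul_le_equilibriumMap_smul hM hMdiag hG hGrow hu hAu hε hεM)
      (equilibriumMap_one_le hM hG hGrow)
    have hp (i : ι) : 0 < p i := (mul_pos hε (hu i)).trans_le (hlo i)
    exact ⟨p, hp, sub_diagonal_mulVec_eq_zero_of_equilibriumMap_eq
      (fun i => (equilibriumMap_denom_pos hM hMdiag hG hGrow hp i).ne') hfix⟩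

end Equilibrium

end Matrix

section EndemicModel

variable {n m : ℕ}

lemma pairDiag_mul_apply (c : Fin m → Fin n → ℝ) (A : Matrix (Fin m × Fin n) (Fin m × Fin n) ℝ)
    (q q' : Fin m × Fin n) : (pairDiag c * A) q q' = c q.1 q.2 * A q q' :=
  diagonal_mul _ _ _ _

lemma pairDiag_apply_of_ne (c : Fin m → Fin n → ℝ) {q q' : Fin m × Fin n} (h : q ≠ q') :
    pairDiag c q q' = 0 :=
  diagonal_apply_ne _ h

lemma Fstar_apply_pos {N : Fin m → ℝ} {piv : Fin m → Fin n → ℝ} (hN : ∀ α, 0 < N α)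
    (hpiv : ∀ α i, 0 < piv α i) {q q' : Fin m × Fin n} (h : q.2 = q'.2) :
    0 < Fstar N piv q q' := by
  rw [Fstar, of_apply, if_pos h]
  exact div_pos (mul_pos (hN _) (hpiv _ _))
    (Finset.sum_pos (fun τ _ => mul_pos (hN τ) (hpiv τ _)) ⟨q'.1, Finset.mem_univ _⟩)

lemma Fstar_apply_nonneg {N : Fin m → ℝ} {piv : Fin m → Fin n → ℝ} (hN : ∀ α, 0 < N α)
    (hpiv : ∀ α i, 0 < piv α i) (q q' : Fin m × Fin n) : 0 ≤ Fstar N piv q q' := by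
  by_cases h : q.2 = q'.2
  · exact (Fstar_apply_pos hN hpiv h).le
  · simp [Fstar, h]

variable {Q : Fin m → Matrix (Fin n) (Fin n) ℝ} {piv : Fin m → Fin n → ℝ}

lemma Lstar_apply_of_ne (α : Fin m) {i j : Fin n} (h : i ≠ j) :
    Lstar Q piv (α, i) (α, j) = -(Q α j i * piv α j / piv α i) := by
  simp [Lstar, h]

lemma Lstar_apply_nonpos (hQoff : ∀ α i j, i ≠ j → 0 ≤ Q α i j) (hpiv : ∀ α i, 0 < piv α i)
    {q q' : Fin m × Fin n} (h : q ≠ q') : Lstar Q piv q q' ≤ 0 := by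
  obtain ⟨α, i⟩ := q
  obtain ⟨σ, j⟩ := q'
  rcases eq_or_ne α σ with rfl | hασ
  · have hij : i ≠ j := fun hij => h (hij ▸ rfl)
    rw [Lstar_apply_of_ne α hij, neg_nonpos]
    exact div_nonneg (mul_nonneg (hQoff α j i hij.symm) (hpiv α j).le) (hpiv α i).le
  · simp [Lstar, hασ]

lemma sum_Lstar_apply (hQdiag : ∀ α i, Q α i i = -∑ j ∈ Finset.univ \ {i}, Q α i j)
    (hpiveig : ∀ α i, ∑ j, Q α j i * piv α j = 0) (hpiv : ∀ α i, 0 < piv α i)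
    (q : Fin m × Fin n) : ∑ q', Lstar Q piv q q' = 0 := by
  obtain ⟨α, i⟩ := q
  have hbalance : ∑ j ∈ Finset.univ \ {i}, Q α j i * piv α j
      = (∑ j ∈ Finset.univ \ {i}, Q α i j) * piv α i := by
    have := hpiveig α i
    rw [← Finset.sum_sdiff (Finset.subset_univ {i}), Finset.sum_singleton, hQdiag] at this
    linarith
  rw [Fintype.sum_prod_type, Finset.sum_eq_single α
    (fun σ _ hσ => Finset.sum_eq_zero fun j _ => by simp [Lstar, Ne.symm hσ]) (by simp),
    ← Finset.sum_sdiff (Finset.subset_univ {i}), Finset.sum_singleton,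
    Finset.sum_congr rfl fun j hj => Lstar_apply_of_ne α
      (Ne.symm (Finset.notMem_singleton.1 (Finset.mem_sdiff.1 hj).2)),
    Finset.sum_neg_distrib, ← Finset.sum_div, hbalance, mul_div_cancel_right₀ _ (hpiv α i).ne']
  simp [Lstar]

lemma sum_pairDiag_add_apply (c : Fin m → Fin n → ℝ)
    (A : Matrix (Fin m × Fin n) (Fin m × Fin n) ℝ) (q : Fin m × Fin n) :
    ∑ q', (pairDiag c + A) q q' = c q.1 q.2 + ∑ q', A q q' := by
  simp [pairDiag, diagonal_apply, Finset.sum_add_distrib]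

lemma reflTransGen_pairDiag_mul_Fstar_sub_pos {β δ : Fin m → Fin n → ℝ} {N : Fin m → ℝ}
    (hβ : ∀ α i, 0 < β α i) (hN : ∀ α, 0 < N α) (hQoff : ∀ α i j, i ≠ j → 0 ≤ Q α i j)
    (hQirr : ∀ α i j, Relation.ReflTransGen (fun a b => 0 < Q α a b) i j)
    (hpiv : ∀ α i, 0 < piv α i) (q q' : Fin m × Fin n) :
    Relation.ReflTransGen
      (fun a b => 0 < (pairDiag β * Fstar N piv - (pairDiag δ + Lstar Q piv)) a b) q q' := by
  set A := pairDiag β * Fstar N piv - (pairDiag δ + Lstar Q piv)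
  have hA {a b : Fin m × Fin n} (hab : a ≠ b) :
      A a b = β a.1 a.2 * Fstar N piv a b - Lstar Q piv a b := by
    simp [A, pairDiag_mul_apply, pairDiag_apply_of_ne _ hab]
  -- dispersal `j → i` in layer `α` makes `(α, i) → (α, j)` an edge of `A`
  have hlayer (α : Fin m) (i j : Fin n) (hQ : 0 < Q α j i) :
      Relation.ReflTransGen (fun a b => 0 < A a b) (α, i) (α, j) := by
    rcases eq_or_ne i j with rfl | hij
    · rfl
    refine .single ?_
    rw [hA (by simpa using hij), Lstar_apply_of_ne α hij]
    have := mul_nonneg (hβ α i).le (Fstar_apply_nonneg hN hpiv (α, i) (α, j))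
    have := div_pos (mul_pos hQ (hpiv α j)) (hpiv α i)
    linarith
  obtain ⟨α, i⟩ := q
  obtain ⟨σ, j⟩ := q'
  have hij : Relation.ReflTransGen (fun a b => 0 < A a b) (α, i) (α, j) :=
    Relation.ReflTransGen.lift' (fun k => (α, k)) (fun a b => hlayer α a b) _ _
      (Relation.ReflTransGen.swap _ _ (hQirr α j i))
  rcases eq_or_ne α σ with rfl | hασ
  · exact hij
  -- infection of patch `j` residents of layer `α` by layer `σ` links the two layers
  refine hij.tail ?_
  have hne : ((α, j) : Fin m × Fin n) ≠ (σ, j) := by simp [hασ]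
  rw [hA hne]
  have := mul_pos (hβ α j) (Fstar_apply_pos hN hpiv (q := (α, j)) (q' := (σ, j)) rfl)
  have := Lstar_apply_nonpos hQoff hpiv hne
  linarith

end EndemicModel

theorem endemic_equilibrium_exists_iff_specAbscissa_pos_general
    {n m : ℕ} (hn : 2 ≤ n) (hm : 1 ≤ m)
    (Q : Fin m → Matrix (Fin n) (Fin n) ℝ)
    (hQoff : ∀ (α : Fin m) (i j : Fin n), i ≠ j → 0 ≤ Q α i j)
    (hQdiag : ∀ (α : Fin m) (i : Fin n), Q α i i = -∑ j ∈ Finset.univ \ {i}, Q α i j)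
    (hQirr : ∀ (α : Fin m) (i j : Fin n),
      Relation.ReflTransGen (fun a b => 0 < Q α a b) i j)
    (piv : Fin m → Fin n → ℝ) (hpivpos : ∀ α i, 0 < piv α i)
    (hpiveig : ∀ (α : Fin m) (i : Fin n), ∑ j, Q α j i * piv α j = 0)
    (N : Fin m → ℝ) (hN : ∀ α, 0 < N α)
    (β δ : Fin m → Fin n → ℝ)
    (hβ : ∀ α i, 0 < β α i) (hδ : ∀ α i, 0 ≤ δ α i) :
    (∃ p : Fin m × Fin n → ℝ, (∀ q, 0 < p q) ∧
        (pairDiag β * Fstar N piv - pairDiag δ - Lstar Q piv).mulVec p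
          - (Matrix.diagonal p).mulVec ((pairDiag β * Fstar N piv).mulVec p) = 0)
      ↔ 0 < specAbscissa (pairDiag β * Fstar N piv - pairDiag δ - Lstar Q piv) := by
  have : Nonempty (Fin m × Fin n) := ⟨(⟨0, hm⟩, ⟨0, by omega⟩)⟩
  rw [sub_sub]
  refine exists_pos_equilibrium_iff_specAbscissa_pos (fun q q' => ?_) (fun q => ?_)
    (fun q q' hqq' => ?_) (fun q => ?_)
    (reflTransGen_pairDiag_mul_Fstar_sub_pos hβ hN hQoff hQirr hpivpos)
  · rw [pairDiag_mul_apply]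
    exact mul_nonneg (hβ _ _).le (Fstar_apply_nonneg hN hpivpos q q')
  · rw [pairDiag_mul_apply]
    exact mul_pos (hβ _ _) (Fstar_apply_pos hN hpivpos rfl)
  · rw [Matrix.add_apply, pairDiag_apply_of_ne δ hqq', zero_add]
    exact Lstar_apply_nonpos hQoff hpivpos hqq'
  · rw [sum_pairDiag_add_apply, sum_Lstar_apply hQdiag hpiveig hpivpos, add_zero]
    exact hδ _ _

/-- There exists an entrywise-positive `p*` satisfying the endemic
equilibrium equation `(B F* − D − L*) p* − diag(p*) B F* p* = 0` if and only if the
spectral abscissa `μ(B F* − D − L*)` is positive. -/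
theorem endemic_equilibrium_exists_iff_specAbscissa_pos
    {n m : ℕ} (hn : 2 ≤ n) (hm : 1 ≤ m)
    (Q : Fin m → Matrix (Fin n) (Fin n) ℝ)
    (hQoff : ∀ (α : Fin m) (i j : Fin n), i ≠ j → 0 ≤ Q α i j)
    (hQdiag : ∀ (α : Fin m) (i : Fin n), Q α i i = -∑ j ∈ Finset.univ \ {i}, Q α i j)
    (hQirr : ∀ (α : Fin m) (i j : Fin n),
      Relation.ReflTransGen (fun a b => 0 < Q α a b) i j)
    (piv : Fin m → Fin n → ℝ) (hpivpos : ∀ α i, 0 < piv α i)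
    (hpiveig : ∀ (α : Fin m) (i : Fin n), ∑ j, Q α j i * piv α j = 0)
    (hpivsum : ∀ α, ∑ i, piv α i = 1)
    (N : Fin m → ℝ) (hN : ∀ α, 0 < N α)
    (β δ : Fin m → Fin n → ℝ)
    (hβ : ∀ α i, 0 < β α i) (hδ : ∀ α i, 0 ≤ δ α i)
    (hδpos : ∀ α, ∃ k, 0 < δ α k) :
    (∃ p : Fin m × Fin n → ℝ, (∀ q, 0 < p q) ∧
        (pairDiag β * Fstar N piv - pairDiag δ - Lstar Q piv).mulVec p
          - (Matrix.diagonal p).mulVec ((pairDiag β * Fstar N piv).mulVec p) = 0)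
      ↔ 0 < specAbscissa (pairDiag β * Fstar N piv - pairDiag δ - Lstar Q piv) :=
  endemic_equilibrium_exists_iff_specAbscissa_pos_general hn hm Q hQoff hQdiag hQirr piv hpivpos
    hpiveig N hN β δ hβ hδ
end

section
/- If δ^α_i ≥ β^α_i for every node i ∈ {1,…,n} and every layer α ∈ {1,…,m}, then the spectral abscissa satisfies μ(B F* − D − L*) ≤ 0. -/
open Matrix BigOperators Finset

/-!
`M = B F* − D − L*` is a Metzler matrix (nonnegative off the diagonal) whose row sums are
`β^α_i − δ^α_i`: each row of `F*` sums to `1`, and each row of `L*` sums to `0` because `π^α`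
is stationary for `Q^α`. By Gershgorin, every eigenvalue `z` lies in a disc centred at some
diagonal entry `M_kk` with radius `∑_{j ≠ k} M_kj`, so `Re z ≤ ∑_j M_kj ≤ 0`.
-/

section Gershgorin

variable {k : Type*} [Fintype k] [DecidableEq k]

theorem exists_re_le_sum_row_of_mem_spectrum {M : Matrix k k ℝ}
    (hM : ∀ i j, i ≠ j → 0 ≤ M i j) {z : ℂ} (hz : z ∈ spectrum ℂ (M.map Complex.ofReal)) :
    ∃ i, z.re ≤ ∑ j, M i j := by
  have hev : Module.End.HasEigenvalue (M.map Complex.ofReal).toLin' z := by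
    rwa [Module.End.hasEigenvalue_iff_mem_spectrum, Matrix.spectrum_toLin']
  obtain ⟨i, hi⟩ := eigenvalue_mem_ball hev
  rw [Metric.mem_closedBall, Complex.dist_eq] at hi
  have hradius : ∑ j ∈ univ.erase i, ‖(M.map Complex.ofReal) i j‖ = ∑ j ∈ univ.erase i, M i j :=
    sum_congr rfl fun j hj => by
      rw [map_apply, Complex.norm_real, Real.norm_of_nonneg (hM i j (ne_of_mem_erase hj).symm)]
  have hre : z.re - M i i ≤ ‖z - (M.map Complex.ofReal) i i‖ := by
    simpa using Complex.re_le_norm (z - M i i)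
  refine ⟨i, ?_⟩
  rw [← add_sum_erase _ _ (mem_univ i)]
  linarith

theorem specAbscissa_nonpos_of_sum_row_nonpos {M : Matrix k k ℝ}
    (hM : ∀ i j, i ≠ j → 0 ≤ M i j) (hrow : ∀ i, ∑ j, M i j ≤ 0) : specAbscissa M ≤ 0 := by
  refine Real.sSup_le ?_ le_rfl
  rintro r ⟨z, hz, rfl⟩
  obtain ⟨i, hi⟩ := exists_re_le_sum_row_of_mem_spectrum hM hz
  exact hi.trans (hrow i)

end Gershgorin

section EquilibriumMatrices

variable {n m : ℕ}

theorem sum_pairDiag_mul_row (c : Fin m → Fin n → ℝ)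
    (A : Matrix (Fin m × Fin n) (Fin m × Fin n) ℝ) (q : Fin m × Fin n) : ∑ q', (pairDiag c * A) q q' = c q.1 q.2 * ∑ q', A q q' := by
  simp only [pairDiag, diagonal_mul, mul_sum]

theorem sum_pairDiag_row (c : Fin m → Fin n → ℝ) (q : Fin m × Fin n) :
    ∑ q', pairDiag c q q' = c q.1 q.2 := by
  simp [pairDiag, diagonal_apply]

theorem Fstar_nonneg {N : Fin m → ℝ} {piv : Fin m → Fin n → ℝ} (hN : ∀ α, 0 ≤ N α)
    (hpiv : ∀ α i, 0 ≤ piv α i) (q q' : Fin m × Fin n) : 0 ≤ Fstar N piv q q' := by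
  rw [Fstar, of_apply]
  split_ifs
  · exact div_nonneg (mul_nonneg (hN _) (hpiv _ _))
      (sum_nonneg fun τ _ => mul_nonneg (hN τ) (hpiv τ _))
  · exact le_rfl

theorem sum_Fstar_row {N : Fin m → ℝ} {piv : Fin m → Fin n → ℝ} {α : Fin m} {i : Fin n}
    (hi : ∑ τ, N τ * piv τ i ≠ 0) : ∑ q', Fstar N piv (α, i) q' = 1 := by
  simp only [Fstar, of_apply, Fintype.sum_prod_type, sum_ite_eq, mem_univ, if_true]
  rw [← sum_div, div_self hi]

theorem Lstar_nonpos_of_ne {Q : Fin m → Matrix (Fin n) (Fin n) ℝ} {piv : Fin m → Fin n → ℝ}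
    (hQ : ∀ α i j, i ≠ j → 0 ≤ Q α i j) (hpiv : ∀ α i, 0 ≤ piv α i)
    {q q' : Fin m × Fin n} (hne : q ≠ q') : Lstar Q piv q q' ≤ 0 := by
  obtain ⟨α, i⟩ := q
  obtain ⟨σ, j⟩ := q'
  rw [Lstar, of_apply]
  split_ifs with hασ hij
  · simp_all
  · exact neg_nonpos.2 (div_nonneg (mul_nonneg (hQ α j i (Ne.symm hij)) (hpiv _ _)) (hpiv _ _))
  · exact le_rfl

theorem sum_Lstar_row {Q : Fin m → Matrix (Fin n) (Fin n) ℝ} {piv : Fin m → Fin n → ℝ}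
    {α : Fin m} {i : Fin n} (hQdiag : Q α i i = -∑ j ∈ univ \ {i}, Q α i j)
    (hpiveig : ∑ j, Q α j i * piv α j = 0) (hpiv : piv α i ≠ 0) :
    ∑ q', Lstar Q piv (α, i) q' = 0 := by
  have hstationary : ∑ j ∈ univ.erase i, Q α j i * piv α j
      = (∑ j ∈ univ \ {i}, Q α i j) * piv α i := by
    rw [← add_sum_erase _ _ (mem_univ i), hQdiag] at hpiveig
    linarith
  have hblock : ∑ j, Lstar Q piv (α, i) (α, j)
      = ∑ j ∈ univ \ {i}, Q α i j - ∑ j ∈ univ.erase i, Q α j i * piv α j / piv α i := by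
    rw [← add_sum_erase _ _ (mem_univ i), sub_eq_add_neg, ← sum_neg_distrib]
    congr 1
    · simp [Lstar]
    · exact sum_congr rfl fun j hj => by simp [Lstar, (ne_of_mem_erase hj).symm]
  rw [Fintype.sum_prod_type, sum_eq_single α (fun σ _ hσ => by simp [Lstar, Ne.symm hσ])
    (by simp), hblock, ← sum_div, hstationary, mul_div_assoc, div_self hpiv, mul_one, sub_self]

end EquilibriumMatrices

theorem specAbscissa_nonpos_of_recovery_dominates_infection_general
    {n m : ℕ} (hm : 1 ≤ m)
    (Q : Fin m → Matrix (Fin n) (Fin n) ℝ)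
    (hQoff : ∀ (α : Fin m) (i j : Fin n), i ≠ j → 0 ≤ Q α i j)
    (hQdiag : ∀ (α : Fin m) (i : Fin n), Q α i i = -∑ j ∈ Finset.univ \ {i}, Q α i j)
    (piv : Fin m → Fin n → ℝ) (hpivpos : ∀ α i, 0 < piv α i)
    (hpiveig : ∀ (α : Fin m) (i : Fin n), ∑ j, Q α j i * piv α j = 0)
    (N : Fin m → ℝ) (hN : ∀ α, 0 < N α)
    (β δ : Fin m → Fin n → ℝ)
    (hβ : ∀ α i, 0 < β α i)
    (hδβ : ∀ (i : Fin n) (α : Fin m), β α i ≤ δ α i) :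
    specAbscissa (pairDiag β * Fstar N piv - pairDiag δ - Lstar Q piv) ≤ 0 := by
  have hpiv : ∀ α i, 0 ≤ piv α i := fun α i => (hpivpos α i).le
  have hmass : ∀ i, ∑ τ, N τ * piv τ i ≠ 0 := fun i =>
    (sum_pos (fun τ _ => mul_pos (hN τ) (hpivpos τ i)) ⟨⟨0, hm⟩, mem_univ _⟩).ne'
  apply specAbscissa_nonpos_of_sum_row_nonpos
  · intro q q' hne
    have hF := Fstar_nonneg (fun α => (hN α).le) hpiv q q'
    have hL := Lstar_nonpos_of_ne hQoff hpiv hne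
    rw [Matrix.sub_apply, Matrix.sub_apply, pairDiag, pairDiag, diagonal_mul,
      diagonal_apply_ne _ hne]
    nlinarith [hβ q.1 q.2]
  · rintro ⟨α, i⟩
    simp only [Matrix.sub_apply, sum_sub_distrib, sum_pairDiag_mul_row, sum_pairDiag_row,
      sum_Fstar_row (hmass i), sum_Lstar_row (hQdiag α i) (hpiveig α i) (hpivpos α i).ne']
    linarith [hδβ i α]

/-- If `δ^α_i ≥ β^α_i` for every node `i` and every layer `α`, then
`μ(B F* − D − L*) ≤ 0`. -/
theorem specAbscissa_nonpos_of_recovery_dominates_infection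
    {n m : ℕ} (hn : 2 ≤ n) (hm : 1 ≤ m)
    (Q : Fin m → Matrix (Fin n) (Fin n) ℝ)
    (hQoff : ∀ (α : Fin m) (i j : Fin n), i ≠ j → 0 ≤ Q α i j)
    (hQdiag : ∀ (α : Fin m) (i : Fin n), Q α i i = -∑ j ∈ Finset.univ \ {i}, Q α i j)
    (hQirr : ∀ (α : Fin m) (i j : Fin n),
      Relation.ReflTransGen (fun a b => 0 < Q α a b) i j)
    (piv : Fin m → Fin n → ℝ) (hpivpos : ∀ α i, 0 < piv α i)
    (hpiveig : ∀ (α : Fin m) (i : Fin n), ∑ j, Q α j i * piv α j = 0)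
    (hpivsum : ∀ α, ∑ i, piv α i = 1)
    (N : Fin m → ℝ) (hN : ∀ α, 0 < N α)
    (β δ : Fin m → Fin n → ℝ)
    (hβ : ∀ α i, 0 < β α i) (hδ : ∀ α i, 0 ≤ δ α i)
    (hδpos : ∀ α, ∃ k, 0 < δ α k)
    (hδβ : ∀ (i : Fin n) (α : Fin m), β α i ≤ δ α i) :
    specAbscissa (pairDiag β * Fstar N piv - pairDiag δ - Lstar Q piv) ≤ 0 :=
  specAbscissa_nonpos_of_recovery_dominates_infection_general hm Q hQoff hQdiag piv hpivpos hpiveig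
    N hN β δ hβ hδβ
end

section
/- Let A ∈ ℝ^{k×k} be an irreducible Laplacian matrix of a strongly connected digraph, i.e. A has nonpositive off-diagonal entries, zero row sums, and the digraph with an edge (i,j) whenever A_{ij} ≠ 0 for i ≠ j is strongly connected; and let Δ ∈ ℝ^{k×k} be a nonnegative diagonal matrix with at least one positive diagonal entry. Then A + Δ is a nonsingular M-matrix: it is invertible, every eigenvalue of A + Δ has positive real part, and (A + Δ)^{-1} is entrywise positive. -/
open Matrix BigOperators Finset

/-! A minimum principle drives everything. Let `A` be an irreducible Laplacian, `d ≥ 0` and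
`y` a vector with `(A + diagonal d) y ≥ 0` that is nonpositive somewhere. At a minimum of `y`
we get `(A y) i ≥ 0`, i.e. `∑ₗ A i l (y l - y i) ≥ 0` with every term `≤ 0`, so every
out-neighbour of `i` is again a minimum; by strong connectivity `y` is constant, and then
`(A + diagonal d) y = d y ≥ 0` forces `d y = 0`.

Applied to a solution of `(A + diagonal d) x = b` with `0 ≤ b ≠ 0`, this makes `x` positive,
hence the columns of the inverse positive. Applied to `-|v|` for an eigenvector `v` whose
eigenvalue `z` has `re z ≤ 0`, where the triangle inequality in the eigen-equation gives
`(A + diagonal d) |v| ≤ re z • |v| ≤ 0`, it forces `d = 0`. -/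

namespace Matrix

variable {ι : Type*} [Fintype ι]

theorem exists_mulVec_eq_smul_of_mem_spectrum {K : Type*} [Field K] [DecidableEq ι]
    {M : Matrix ι ι K} {μ : K} (h : μ ∈ spectrum K M) : ∃ v ≠ 0, M *ᵥ v = μ • v := by
  rw [← spectrum_toLin', ← Module.End.hasEigenvalue_iff_mem_spectrum] at h
  obtain ⟨v, hv⟩ := h.exists_hasEigenvector
  exact ⟨v, hv.2, by simpa using hv.apply_eq_smul⟩

theorem isUnit_of_isUnit_map_ofReal [DecidableEq ι] {M : Matrix ι ι ℝ}
    (h : IsUnit (M.map Complex.ofReal)) : IsUnit M := by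
  rw [isUnit_iff_isUnit_det, isUnit_iff_ne_zero] at h ⊢
  intro hM
  apply h
  change (Complex.ofRealHom.mapMatrix M).det = 0
  rw [← RingHom.map_det, hM, map_zero]

theorem mulVec_norm_le_re_mul_norm [DecidableEq ι] {B : Matrix ι ι ℝ}
    (hoff : ∀ i j, i ≠ j → B i j ≤ 0) {v : ι → ℂ} {z : ℂ}
    (hv : B.map Complex.ofReal *ᵥ v = z • v) (i : ι) :
    (B *ᵥ fun l => ‖v l‖) i ≤ z.re * ‖v i‖ := by
  set s := univ.erase i
  have hoff' : ∀ l ∈ s, B i l ≤ 0 := fun l hl => hoff i l (ne_of_mem_erase hl).symm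
  have heig : ((B i i : ℂ) - z) * v i = ∑ l ∈ s, ((-B i l : ℝ) : ℂ) * v l := by
    have hvi := congrFun hv i
    simp only [mulVec, dotProduct, map_apply, Pi.smul_apply, smul_eq_mul,
      ← add_sum_erase _ _ (mem_univ i)] at hvi
    push_cast
    simp only [neg_mul, sum_neg_distrib]
    linear_combination hvi
  have hdiag : (B i i - z.re) * ‖v i‖ ≤ ∑ l ∈ s, -B i l * ‖v l‖ :=
    calc (B i i - z.re) * ‖v i‖ ≤ ‖(B i i : ℂ) - z‖ * ‖v i‖ := by
          gcongr; simpa using Complex.re_le_norm ((B i i : ℂ) - z)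
      _ = ‖∑ l ∈ s, ((-B i l : ℝ) : ℂ) * v l‖ := by rw [← norm_mul, heig]
      _ ≤ ∑ l ∈ s, -B i l * ‖v l‖ := (norm_sum_le _ _).trans_eq <| sum_congr rfl fun l hl => by
          rw [norm_mul, Complex.norm_real, Real.norm_of_nonneg (neg_nonneg.2 (hoff' l hl))]
  have hsplit : (B *ᵥ fun l => ‖v l‖) i = B i i * ‖v i‖ + ∑ l ∈ s, B i l * ‖v l‖ := by
    simp only [mulVec, dotProduct]
    rw [← add_sum_erase _ _ (mem_univ i)]
  simp only [neg_mul, sum_neg_distrib] at hdiag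
  linarith

section Laplacian

variable {A : Matrix ι ι ℝ}

theorem mulVec_apply_eq_sum_mul_sub (hrow : ∀ i, ∑ j, A i j = 0) (f : ι → ℝ) (i : ι) :
    (A *ᵥ f) i = ∑ l, A i l * (f l - f i) := by
  simp only [mulVec, dotProduct, mul_sub, sum_sub_distrib, ← sum_mul, hrow, zero_mul, sub_zero]

theorem add_diagonal_mulVec_const [DecidableEq ι] (hrow : ∀ i, ∑ j, A i j = 0)
    (d : ι → ℝ) (c : ℝ) : (A + diagonal d) *ᵥ Function.const ι c = fun i => d i * c := by
  ext i
  simp [add_mulVec, mulVec_diagonal, mulVec_apply_eq_sum_mul_sub hrow]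

theorem eq_of_isMax_of_mulVec_nonpos (hoff : ∀ i j, i ≠ j → A i j ≤ 0)
    (hrow : ∀ i, ∑ j, A i j = 0) {f : ι → ℝ} {i : ι} (hmax : ∀ l, f l ≤ f i)
    (hAf : (A *ᵥ f) i ≤ 0) {l : ι} (hl : A i l ≠ 0) : f l = f i := by
  have hterm : ∀ l ∈ univ, 0 ≤ A i l * (f l - f i) := by
    intro l _
    rcases eq_or_ne i l with rfl | hil
    · simp
    · exact mul_nonneg_of_nonpos_of_nonpos (hoff i l hil) (sub_nonpos.2 (hmax l))
  rw [mulVec_apply_eq_sum_mul_sub hrow] at hAf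
  have hzero := (sum_eq_zero_iff_of_nonneg hterm).1 (le_antisymm hAf (sum_nonneg hterm)) l
    (mem_univ l)
  exact sub_eq_zero.1 ((mul_eq_zero.1 hzero).resolve_left hl)

structure IsIrreducibleLaplacian (A : Matrix ι ι ℝ) : Prop where
  off_diag_nonpos : ∀ i j, i ≠ j → A i j ≤ 0
  row_sum_eq_zero : ∀ i, ∑ j, A i j = 0
  reachable : ∀ i j, Relation.ReflTransGen (fun a b => a ≠ b ∧ A a b ≠ 0) i j

namespace IsIrreducibleLaplacian

theorem eq_of_isMax_of_forall_mulVec_nonpos (hA : A.IsIrreducibleLaplacian) {f : ι → ℝ}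
    {i₀ : ι} (hmax : ∀ l, f l ≤ f i₀) (hsub : ∀ i, f i = f i₀ → (A *ᵥ f) i ≤ 0) (j : ι) :
    f j = f i₀ := by
  induction hA.reachable i₀ j with
  | refl => rfl
  | tail _ hedge ih =>
    exact (eq_of_isMax_of_mulVec_nonpos hA.off_diag_nonpos hA.row_sum_eq_zero (ih ▸ hmax)
      (hsub _ ih) hedge.2).trans ih

variable [DecidableEq ι] {d : ι → ℝ}

theorem exists_eq_const_of_add_diagonal_mulVec_nonneg (hA : A.IsIrreducibleLaplacian)
    (hd : 0 ≤ d) {y : ι → ℝ} (hy : 0 ≤ (A + diagonal d) *ᵥ y) {j : ι} (hj : y j ≤ 0) :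
    ∃ c, y = Function.const ι c ∧ ∀ i, d i * c = 0 := by
  have : Nonempty ι := ⟨j⟩
  obtain ⟨i₀, -, hmin⟩ := exists_min_image univ y univ_nonempty
  have hc : y i₀ ≤ 0 := (hmin j (mem_univ j)).trans hj
  have hsuper : ∀ i, -y i = -y i₀ → (A *ᵥ -y) i ≤ 0 := fun i hi => by
    have hyi := hy i
    rw [neg_inj] at hi
    rw [Pi.zero_apply, add_mulVec, Pi.add_apply, mulVec_diagonal] at hyi
    rw [mulVec_neg, Pi.neg_apply, neg_nonpos]
    linarith [mul_nonpos_of_nonneg_of_nonpos (hd i) (hi ▸ hc)]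
  have hconst : y = Function.const ι (y i₀) := funext fun l => neg_inj.1 <|
    hA.eq_of_isMax_of_forall_mulVec_nonpos (fun l => neg_le_neg (hmin l (mem_univ l))) hsuper l
  refine ⟨y i₀, hconst, fun i => le_antisymm (mul_nonpos_of_nonneg_of_nonpos (hd i) hc) ?_⟩
  rw [hconst, add_diagonal_mulVec_const hA.row_sum_eq_zero] at hy
  exact hy i

theorem pos_of_add_diagonal_mulVec_eq (hA : A.IsIrreducibleLaplacian) (hd : 0 ≤ d)
    {x b : ι → ℝ} (hx : (A + diagonal d) *ᵥ x = b) (hb : 0 ≤ b) (hb0 : b ≠ 0) (i : ι) :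
    0 < x i := by
  by_contra! hxi
  obtain ⟨c, rfl, hdc⟩ := hA.exists_eq_const_of_add_diagonal_mulVec_nonneg hd (hx ▸ hb) hxi
  exact hb0 (by rw [← hx, add_diagonal_mulVec_const hA.row_sum_eq_zero]; exact funext hdc)

theorem inv_add_diagonal_pos (hA : A.IsIrreducibleLaplacian) (hd : 0 ≤ d)
    (hB : IsUnit (A + diagonal d)) (i j : ι) : 0 < (A + diagonal d)⁻¹ i j := by
  have hcol : (A + diagonal d) *ᵥ ((A + diagonal d)⁻¹ *ᵥ Pi.single j 1) = Pi.single j 1 := by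
    rw [mulVec_mulVec, mul_nonsing_inv _ ((isUnit_iff_isUnit_det _).1 hB), one_mulVec]
  simpa [mulVec_single_one] using hA.pos_of_add_diagonal_mulVec_eq hd hcol
    (Pi.single_nonneg.2 zero_le_one) (by simp) i

theorem re_pos_of_mem_spectrum_add_diagonal (hA : A.IsIrreducibleLaplacian) (hd : 0 ≤ d)
    (hdpos : ∃ i, 0 < d i) {z : ℂ}
    (hz : z ∈ spectrum ℂ ((A + diagonal d).map Complex.ofReal)) : 0 < z.re := by
  obtain ⟨v, hv0, hv⟩ := exists_mulVec_eq_smul_of_mem_spectrum hz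
  by_contra! hre
  have hoff : ∀ i j, i ≠ j → (A + diagonal d) i j ≤ 0 := fun i j hij => by
    simpa [diagonal_apply_ne _ hij] using hA.off_diag_nonpos i j hij
  have hy : 0 ≤ (A + diagonal d) *ᵥ -fun l => ‖v l‖ := fun i => by
    rw [mulVec_neg, Pi.neg_apply, Pi.zero_apply, neg_nonneg]
    exact (mulVec_norm_le_re_mul_norm hoff hv i).trans
      (mul_nonpos_of_nonpos_of_nonneg hre (norm_nonneg _))
  obtain ⟨j, hj⟩ := Function.ne_iff.1 hv0
  obtain ⟨c, hc, hdc⟩ := hA.exists_eq_const_of_add_diagonal_mulVec_nonneg hd hy (j := j)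
    (neg_nonpos.2 (norm_nonneg _))
  have hc0 : c ≠ 0 := by
    have hcj : -‖v j‖ = c := congrFun hc j
    simpa [← hcj] using hj
  obtain ⟨i, hi⟩ := hdpos
  exact mul_ne_zero hi.ne' hc0 (hdc i)

theorem isUnit_add_diagonal (hA : A.IsIrreducibleLaplacian) (hd : 0 ≤ d)
    (hdpos : ∃ i, 0 < d i) : IsUnit (A + diagonal d) := by
  refine isUnit_of_isUnit_map_ofReal (not_not.1 fun h => ?_)
  have hre := hA.re_pos_of_mem_spectrum_add_diagonal hd hdpos ((spectrum.zero_mem_iff ℂ).2 h)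
  simp at hre

end IsIrreducibleLaplacian

end Laplacian

end Matrix

theorem perturbed_irreducible_laplacian_is_nonsingular_M_matrix_general
    {k : ℕ}
    (A : Matrix (Fin k) (Fin k) ℝ)
    (hoff : ∀ i j : Fin k, i ≠ j → A i j ≤ 0)
    (hrow : ∀ i : Fin k, ∑ j, A i j = 0)
    (hirr : ∀ i j : Fin k,
      Relation.ReflTransGen (fun a b => a ≠ b ∧ A a b ≠ 0) i j)
    (d : Fin k → ℝ) (hd : ∀ i, 0 ≤ d i) (hdpos : ∃ i, 0 < d i) :
    IsUnit (A + Matrix.diagonal d) ∧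
      (∀ z ∈ spectrum ℂ ((A + Matrix.diagonal d).map Complex.ofReal), 0 < z.re) ∧
      (∀ i j : Fin k, 0 < (A + Matrix.diagonal d)⁻¹ i j) := by
  have hA : A.IsIrreducibleLaplacian := ⟨hoff, hrow, hirr⟩
  have hunit := hA.isUnit_add_diagonal hd hdpos
  exact ⟨hunit, fun _ => hA.re_pos_of_mem_spectrum_add_diagonal hd hdpos,
    hA.inv_add_diagonal_pos hd hunit⟩

/-- Let `A` be an irreducible Laplacian matrix of a strongly connected
digraph (nonpositive off-diagonal entries, zero row sums, strongly connected support
digraph) and let `Δ = diagonal d` be a nonnegative diagonal matrix with at least one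
positive diagonal entry. Then `A + Δ` is a nonsingular M-matrix: it is invertible, every
(complex) eigenvalue of `A + Δ` has positive real part, and `(A + Δ)⁻¹` is entrywise
positive. -/
theorem perturbed_irreducible_laplacian_is_nonsingular_M_matrix
    {k : ℕ} (hk : 2 ≤ k)
    (A : Matrix (Fin k) (Fin k) ℝ)
    (hoff : ∀ i j : Fin k, i ≠ j → A i j ≤ 0)
    (hrow : ∀ i : Fin k, ∑ j, A i j = 0)
    (hirr : ∀ i j : Fin k,
      Relation.ReflTransGen (fun a b => a ≠ b ∧ A a b ≠ 0) i j)
    (d : Fin k → ℝ) (hd : ∀ i, 0 ≤ d i) (hdpos : ∃ i, 0 < d i) :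
    IsUnit (A + Matrix.diagonal d) ∧
      (∀ z ∈ spectrum ℂ ((A + Matrix.diagonal d).map Complex.ofReal), 0 < z.re) ∧
      (∀ i j : Fin k, 0 < (A + Matrix.diagonal d)⁻¹ i j) :=
  perturbed_irreducible_laplacian_is_nonsingular_M_matrix_general A hoff hrow hirr d hd hdpos
end
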